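/- arXiv:1906.02233 — 5 statements merged into one kernel-verified Lean document; each statement's English description precedes it below -/
import Mathlib

section
/- Let F : ℂ × ℂ → ℂ be an entire caloric function, let f(z) := F(0, z) be its initial condition, and let c_k := f^{(k)}(0)/k! be the Taylor coefficients of f at 0. Then the order ρ := limsup_{n→∞} (n ln n)/(−ln|c_n|) of f satisfies ρ ≤ 2, and moreover limsup_{n→∞} n·|c_n|^{2/n} = 0; in particular, in the extreme case ρ = 2 the type of f (with respect to order 2) is zero, i.e. f is of minimal type. -/
/-! Write `∂ₜ`, `∂_z` for the partial derivatives. Since second derivatives of an analytic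
function commute, the heat equation `∂ₜ F = ∂_z² F` propagates to `∂ₜ^m ∂_z^j F = ∂_z^(2m+j) F`.
Hence `f^(2m+j)(0)` is the `m`-th derivative at `0` of the entire function `t ↦ ∂_z^j F(t, 0)`,
and Cauchy's estimates give `|f^(n)(0)| ≤ C_R (n/2)! / R^(n/2)` for every `R > 0`. As
`n! ≥ (n/2)! (n/2 + 1)^(n/2)`, this yields `|c_n|^2 (K n)^n ≤ C_K` for every `K`, i.e.
`n |c_n|^(2/n) ≤ C_K^(1/n) / K`, so `n |c_n|^(2/n) → 0`. Finally `n |c_n|^(2/n) ≤ 1` means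
`-log |c_n| ≥ (n/2) log n`, which bounds the order by `2`. -/

open Filter MeasureTheory

/-- An entire caloric function: `F : ℂ × ℂ → ℂ` is analytic on all of `ℂ²` and satisfies
the heat equation `∂_t F(t,z) = ∂_z² F(t,z)` everywhere. -/
def IsEntireCaloric (F : ℂ × ℂ → ℂ) : Prop :=
  AnalyticOnNhd ℂ F Set.univ ∧
    ∀ t z : ℂ, deriv (fun s => F (s, z)) t = iteratedDeriv 2 (fun w => F (t, w)) z

open Set Topology
open scoped Nat

section DirDeriv

variable {𝕜 E F : Type*} [NontriviallyNormedField 𝕜] [NormedAddCommGroup E] [NormedSpace 𝕜 E]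
  [NormedAddCommGroup F] [NormedSpace 𝕜 F]

variable (𝕜) in
noncomputable def dirDeriv (v : E) (G : E → F) : E → F := fun x => fderiv 𝕜 G x v

theorem hasDerivAt_comp_add_smul {H : E → F} {x v : E} {s : 𝕜}
    (hH : DifferentiableAt 𝕜 H (x + s • v)) :
    HasDerivAt (fun s => H (x + s • v)) (dirDeriv 𝕜 v H (x + s • v)) s := by
  have hline : HasDerivAt (fun s : 𝕜 => x + s • v) v s := by
    simpa using ((hasDerivAt_id s).smul_const v).const_add x
  exact hH.hasFDerivAt.comp_hasDerivAt s hline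

variable [CompleteSpace F] {G : E → F}

theorem AnalyticOnNhd.dirDeriv {s : Set E} (hG : AnalyticOnNhd 𝕜 G s) (v : E) :
    AnalyticOnNhd 𝕜 (_root_.dirDeriv 𝕜 v G) s :=
  fun x hx => ((ContinuousLinearMap.apply 𝕜 F v).analyticAt _).comp (hG.fderiv x hx)

theorem AnalyticOnNhd.iterate_dirDeriv {s : Set E} (hG : AnalyticOnNhd 𝕜 G s) (v : E) (k : ℕ) :
    AnalyticOnNhd 𝕜 ((_root_.dirDeriv 𝕜 v)^[k] G) s := by
  induction k with
  | zero => exact hG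
  | succ k ih => rw [Function.iterate_succ_apply']; exact ih.dirDeriv v

theorem dirDeriv_comm (hG : AnalyticOnNhd 𝕜 G univ) (v w : E) :
    dirDeriv 𝕜 v (dirDeriv 𝕜 w G) = dirDeriv 𝕜 w (dirDeriv 𝕜 v G) := by
  funext x
  have hdiff : DifferentiableAt 𝕜 (fderiv 𝕜 G) x := (hG.fderiv x trivial).differentiableAt
  have hsymm : IsSymmSndFDerivAt 𝕜 G x := (hG x trivial).contDiffAt.isSymmSndFDerivAt_of_omega
  have hsnd : ∀ v w : E, dirDeriv 𝕜 v (dirDeriv 𝕜 w G) x = fderiv 𝕜 (fderiv 𝕜 G) x v w := by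
    intro v w
    show fderiv 𝕜 (fun y => fderiv 𝕜 G y w) x v = _
    rw [fderiv_clm_apply hdiff (differentiableAt_const w)]
    simp
  rw [hsnd, hsnd, hsymm.eq]

theorem dirDeriv_iterate_comm (hG : AnalyticOnNhd 𝕜 G univ) (v w : E) (j : ℕ) :
    dirDeriv 𝕜 v ((dirDeriv 𝕜 w)^[j] G) = (dirDeriv 𝕜 w)^[j] (dirDeriv 𝕜 v G) := by
  induction j generalizing G with
  | zero => rfl
  | succ j ih =>
    rw [Function.iterate_succ_apply, Function.iterate_succ_apply, ih (hG.dirDeriv w),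
      dirDeriv_comm hG]

theorem iterate_dirDeriv_iterate_of_heat (hG : AnalyticOnNhd 𝕜 G univ) {v w : E}
    (hheat : dirDeriv 𝕜 v G = (dirDeriv 𝕜 w)^[2] G) (m j : ℕ) :
    (dirDeriv 𝕜 v)^[m] ((dirDeriv 𝕜 w)^[j] G) = (dirDeriv 𝕜 w)^[2 * m + j] G := by
  induction m generalizing j with
  | zero => simp
  | succ m ih =>
    rw [Function.iterate_succ_apply, dirDeriv_iterate_comm hG, hheat,
      ← Function.iterate_add_apply, ih]
    ring_nf

theorem iteratedDeriv_comp_add_smul (hG : AnalyticOnNhd 𝕜 G univ) (x v : E) (k : ℕ) (s : 𝕜) :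
    iteratedDeriv k (fun s => G (x + s • v)) s = (dirDeriv 𝕜 v)^[k] G (x + s • v) := by
  induction k generalizing s with
  | zero => simp
  | succ k ih =>
    rw [iteratedDeriv_succ, funext ih, Function.iterate_succ_apply']
    exact (hasDerivAt_comp_add_smul
      ((hG.iterate_dirDeriv v k) _ trivial).differentiableAt).deriv

end DirDeriv

section Slices

variable {𝕜 F : Type*} [NontriviallyNormedField 𝕜] [NormedAddCommGroup F] [NormedSpace 𝕜 F]
  [CompleteSpace F] {G : 𝕜 × 𝕜 → F}

theorem iteratedDeriv_comp_prodMk_left (hG : AnalyticOnNhd 𝕜 G univ) (k : ℕ) (t z : 𝕜) :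
    iteratedDeriv k (fun s => G (s, z)) t = (dirDeriv 𝕜 (1, 0))^[k] G (t, z) := by
  simpa using iteratedDeriv_comp_add_smul hG (0, z) (1, 0) k t

theorem iteratedDeriv_comp_prodMk_right (hG : AnalyticOnNhd 𝕜 G univ) (k : ℕ) (t z : 𝕜) :
    iteratedDeriv k (fun w => G (t, w)) z = (dirDeriv 𝕜 (0, 1))^[k] G (t, z) := by
  simpa using iteratedDeriv_comp_add_smul hG (t, 0) (0, 1) k z

end Slices

theorem Differentiable.exists_norm_iteratedDeriv_div_factorial_mul_pow_le {E : Type*}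
    [NormedAddCommGroup E] [NormedSpace ℂ E] [CompleteSpace E] {g : ℂ → E}
    (hg : Differentiable ℂ g) (c : ℂ) {R : ℝ} (hR : 0 < R) :
    ∃ C, ∀ m, ‖iteratedDeriv m g c‖ / m ! * R ^ m ≤ C := by
  obtain ⟨C, hC⟩ := (isCompact_sphere c R).exists_bound_of_continuousOn hg.continuous.continuousOn
  refine ⟨C, fun m => ?_⟩
  have hcauchy := Complex.norm_iteratedDeriv_le_of_forall_mem_sphere_norm_le m hR
    hg.diffContOnCl hC
  calc ‖iteratedDeriv m g c‖ / m ! * R ^ m ≤ m ! * C / R ^ m / m ! * R ^ m := by gcongr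
    _ = C := by field_simp

namespace IsEntireCaloric

variable {F : ℂ × ℂ → ℂ}

theorem dirDeriv_fst_eq_iterate_two (hF : IsEntireCaloric F) :
    dirDeriv ℂ (1, 0) F = (dirDeriv ℂ (0, 1))^[2] F := by
  funext ⟨t, z⟩
  rw [← iteratedDeriv_comp_prodMk_right hF.1, ← hF.2, ← iteratedDeriv_one,
    iteratedDeriv_comp_prodMk_left hF.1, Function.iterate_one]

theorem iteratedDeriv_initial (hF : IsEntireCaloric F) (m j : ℕ) :
    iteratedDeriv (2 * m + j) (fun z => F (0, z)) 0 =
      iteratedDeriv m (fun t => (dirDeriv ℂ (0, 1))^[j] F (t, 0)) 0 := by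
  rw [iteratedDeriv_comp_prodMk_right hF.1,
    iteratedDeriv_comp_prodMk_left (hF.1.iterate_dirDeriv _ j),
    iterate_dirDeriv_iterate_of_heat hF.1 hF.dirDeriv_fst_eq_iterate_two]

theorem exists_norm_iteratedDeriv_initial_le (hF : IsEntireCaloric F) {R : ℝ} (hR : 0 < R) :
    ∃ C, ∀ n, ‖iteratedDeriv n (fun z => F (0, z)) 0‖ / (n / 2)! * R ^ (n / 2) ≤ C := by
  have hslice (j : ℕ) : Differentiable ℂ (fun t => (dirDeriv ℂ (0, 1))^[j] F (t, 0)) := fun t =>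
    ((hF.1.iterate_dirDeriv _ j) (t, 0) trivial).differentiableAt.comp t (by fun_prop)
  choose C hC using fun j => (hslice j).exists_norm_iteratedDeriv_div_factorial_mul_pow_le 0 hR
  refine ⟨max (C 0) (C 1), fun n => ?_⟩
  obtain ⟨m, j, hj, rfl⟩ : ∃ m j, j < 2 ∧ n = 2 * m + j :=
    ⟨n / 2, n % 2, n.mod_lt two_pos, (n.div_add_mod 2).symm⟩
  rw [hF.iteratedDeriv_initial, (by omega : (2 * m + j) / 2 = m)]
  interval_cases j
  · exact (hC 0 m).trans (le_max_left _ _)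
  · exact (hC 1 m).trans (le_max_right _ _)

end IsEntireCaloric

theorem Nat.sq_factorial_div_two_mul_pow_le_sq_factorial (n : ℕ) :
    (n / 2)! ^ 2 * (n / 2 + 1) ^ n ≤ n ! ^ 2 := by
  have hhalf : (n / 2)! * (n / 2 + 1) ^ (n - n / 2) ≤ n ! := by
    simpa [Nat.add_sub_cancel' (Nat.div_le_self n 2)] using
      Nat.factorial_mul_pow_le_factorial (m := n / 2) (n := n - n / 2)
  calc (n / 2)! ^ 2 * (n / 2 + 1) ^ n ≤ (n / 2)! ^ 2 * (n / 2 + 1) ^ (2 * (n - n / 2)) := by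
        gcongr
        · omega
        · omega
    _ = ((n / 2)! * (n / 2 + 1) ^ (n - n / 2)) ^ 2 := by ring
    _ ≤ n ! ^ 2 := by gcongr

theorem exists_sq_mul_pow_le_of_factorial_div_two_bound {a : ℕ → ℝ} (ha : ∀ n, 0 ≤ a n)
    (hbound : ∀ R > 0, ∃ C, ∀ n, a n * n ! / (n / 2)! * R ^ (n / 2) ≤ C) {K : ℝ} (hK : 0 < K) :
    ∃ C, ∀ n : ℕ, a n ^ 2 * (K * n) ^ n ≤ C := by
  obtain ⟨C, hC⟩ := hbound (2 * K + 1) (by positivity)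
  refine ⟨C ^ 2 * (2 * K + 1), fun n => ?_⟩
  set m := n / 2
  have hfact : (m ! : ℝ) ^ 2 * (m + 1 : ℝ) ^ n ≤ (n ! : ℝ) ^ 2 := by
    exact_mod_cast Nat.sq_factorial_div_two_mul_pow_le_sq_factorial n
  have hn : (n : ℝ) ≤ 2 * (m + 1) := by exact_mod_cast (by omega : n ≤ 2 * (m + 1))
  have hpow : (2 * K) ^ n ≤ (2 * K + 1) ^ (2 * m + 1) :=
    (pow_le_pow_left₀ (by positivity) (by linarith) n).trans
      (pow_le_pow_right₀ (by linarith) (by omega))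
  calc a n ^ 2 * (K * n) ^ n ≤ a n ^ 2 * (2 * K * (m + 1)) ^ n := by
        have := ha n; gcongr a n ^ 2 * ?_ ^ n; nlinarith
    _ = a n ^ 2 * (m + 1 : ℝ) ^ n * (2 * K) ^ n := by rw [mul_pow]; ring
    _ ≤ a n ^ 2 * ((n ! : ℝ) ^ 2 / (m ! : ℝ) ^ 2) * (2 * K + 1) ^ (2 * m + 1) := by
        gcongr
        rw [le_div_iff₀ (by positivity)]
        linarith
    _ = (a n * n ! / m ! * (2 * K + 1) ^ m) ^ 2 * (2 * K + 1) := by ring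
    _ ≤ C ^ 2 * (2 * K + 1) := by
        gcongr
        · have := ha n; positivity
        · exact hC n

theorem Real.rpow_two_div_le_of_sq_le_pow {a b : ℝ} {n : ℕ} (ha : 0 ≤ a) (hb : 0 ≤ b) (hn : n ≠ 0)
    (h : a ^ 2 ≤ b ^ n) : a ^ (2 / n : ℝ) ≤ b := by
  calc a ^ (2 / n : ℝ) = (a ^ 2) ^ (n⁻¹ : ℝ) := by
        rw [div_eq_mul_inv, Real.rpow_mul ha, Real.rpow_two]
    _ ≤ (b ^ n) ^ (n⁻¹ : ℝ) := by gcongr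
    _ = b := Real.pow_rpow_inv_natCast hb hn

theorem tendsto_mul_rpow_two_div_of_sq_mul_pow_le {a : ℕ → ℝ} (ha : ∀ n, 0 ≤ a n)
    (hbound : ∀ K > 0, ∃ C, ∀ n : ℕ, a n ^ 2 * (K * n) ^ n ≤ C) :
    Tendsto (fun n : ℕ => n * a n ^ (2 / n : ℝ)) atTop (𝓝 0) := by
  refine tendsto_order.2 ⟨fun b hb => Eventually.of_forall fun n => ?_, fun ε hε => ?_⟩
  · exact hb.trans_le (by have := ha n; positivity)
  obtain ⟨C, hC⟩ := hbound (4 / ε) (by positivity)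
  have hC_le : ∀ᶠ n : ℕ in atTop, C ≤ 2 ^ n :=
    (tendsto_pow_atTop_atTop_of_one_lt one_lt_two).eventually_ge_atTop C
  filter_upwards [hC_le, eventually_ge_atTop 1] with n hn hn1
  have hnpos : (0 : ℝ) < n := by exact_mod_cast hn1
  have hsq : a n ^ 2 ≤ (2 / (4 / ε * n)) ^ n := by
    rw [div_pow, le_div_iff₀ (by positivity)]
    exact (hC n).trans hn
  calc (n : ℝ) * a n ^ (2 / n : ℝ) ≤ n * (2 / (4 / ε * n)) := by
        gcongr
        exact Real.rpow_two_div_le_of_sq_le_pow (ha n) (by positivity) (by omega) hsq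
    _ = ε / 2 := by field_simp; ring
    _ < ε := half_lt_self hε

theorem mul_log_div_neg_log_le_two {n x : ℝ} (hn : 1 < n) (hx : 0 ≤ x) (h : n * x ^ (2 / n) ≤ 1) :
    n * Real.log n / -Real.log x ≤ 2 := by
  rcases hx.eq_or_lt with rfl | hx
  · simp -- `log 0 = 0`, and Lean divides by `0` to get `0`
  have hn0 : 0 < n := by linarith
  have hlog : 2 / n * Real.log x ≤ -Real.log n := by
    rw [← Real.log_rpow hx, ← Real.log_inv]
    exact Real.log_le_log (by positivity) (by rw [inv_eq_one_div, le_div_iff₀ hn0]; linarith)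
  have hlogn : 0 < Real.log n := Real.log_pos hn
  have hneg : n / 2 * Real.log n ≤ -Real.log x := by
    have := mul_le_mul_of_nonneg_left hlog (by positivity : 0 ≤ n / 2)
    field_simp at this ⊢
    linarith
  rw [div_le_iff₀ (by nlinarith [mul_pos hn0 hlogn])]
  linarith

theorem limsup_mul_log_div_neg_log_le_two {x : ℕ → ℝ} (hx : ∀ n, 0 ≤ x n)
    (h : Tendsto (fun n : ℕ => n * x n ^ (2 / n : ℝ)) atTop (𝓝 0)) :
    limsup (fun n : ℕ => ((n * Real.log n / -Real.log (x n) : ℝ) : EReal)) atTop ≤ 2 := by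
  refine limsup_le_of_le (by isBoundedDefault) ?_
  filter_upwards [h.eventually_le_const zero_lt_one, eventually_ge_atTop 2] with n hn hn2
  exact EReal.coe_le_coe_iff.2 (mul_log_div_neg_log_le_two (by exact_mod_cast hn2) (hx n) hn)

/-- If `f(z) = F(0,z)` is the initial condition of an entire caloric function,
with Taylor coefficients `c_k = f⁽ᵏ⁾(0)/k!`, then the order
`ρ = limsup n ln n / (−ln |c_n|)` of `f` satisfies `ρ ≤ 2`, and moreover
`limsup_n n |c_n|^{2/n} = 0` (so if `ρ = 2` then `f` is of minimal type). -/
theorem initialCondition_order_le_two_and_minimal_type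
    (F : ℂ × ℂ → ℂ) (hF : IsEntireCaloric F)
    (c : ℕ → ℂ)
    (hc : ∀ k : ℕ, c k = iteratedDeriv k (fun z => F (0, z)) 0 / (k.factorial : ℂ)) :
    Filter.limsup
        (fun n : ℕ =>
          (((n : ℝ) * Real.log n / (-Real.log ‖c n‖) : ℝ) : EReal))
        Filter.atTop ≤ (2 : EReal) ∧
    Filter.limsup
        (fun n : ℕ =>
          (((n : ℝ) * ‖c n‖ ^ (2 / (n : ℝ)) : ℝ) : EReal))
        Filter.atTop = (0 : EReal) := by
  have hcoeff (n : ℕ) : ‖c n‖ * n ! = ‖iteratedDeriv n (fun z => F (0, z)) 0‖ := by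
    rw [hc, norm_div, Complex.norm_natCast, div_mul_cancel₀ _ (by positivity)]
  have hlim : Tendsto (fun n : ℕ => (n : ℝ) * ‖c n‖ ^ (2 / (n : ℝ))) atTop (𝓝 0) := by
    refine tendsto_mul_rpow_two_div_of_sq_mul_pow_le (fun n => norm_nonneg _) fun K hK => ?_
    refine exists_sq_mul_pow_le_of_factorial_div_two_bound (fun n => norm_nonneg _)
      (fun R hR => ?_) hK
    simpa only [hcoeff] using hF.exists_norm_iteratedDeriv_initial_le hR
  refine ⟨limsup_mul_log_div_neg_log_le_two (fun n => norm_nonneg _) hlim, ?_⟩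
  exact (EReal.tendsto_coe.2 hlim).limsup_eq
end

section
/- Let f : ℂ → ℂ be an entire function whose Taylor coefficients c_k := f^{(k)}(0)/k! satisfy limsup_{n→∞} n·|c_n|^{2/n} = 0 (equivalently, the order of f is at most 2, with minimal type in the case the order equals 2). Then for every (t, z) ∈ ℂ × ℂ the series F(t, z) := Σ_{j≥0} f^{(2j)}(z)·t^j/j! converges absolutely, the resulting function F is analytic on all of ℂ², it satisfies the heat equation ∂_t F(t,z) = ∂_z² F(t,z) for all (t,z) ∈ ℂ², and F(0, z) = f(z) for all z ∈ ℂ. -/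
/-!
Expanding each `f⁽²ʲ⁾` in its Taylor series at `0` turns the heat series into the double power
series `∑_{j,k} a_{jk} tʲ zᵏ` with `a_{jk} = f⁽²ʲ⁺ᵏ⁾(0) / (j! k!)`. For `cₙ = f⁽ⁿ⁾(0) / n!` the
hypothesis gives `nⁿ |cₙ|² ≤ C εⁿ` for every `ε > 0`; together with
`(2j+k)!² ≤ 4^{2j+k} (2j+k)^{2j+k} (j! k!)²` this makes `a_{jk} = O(δ^{j+k})` for every `δ > 0`.
So the double series converges absolutely on all of `ℂ²`, which gives absolute convergence of the
heat series and its analyticity. The coefficients of `f'` decay in the same way, so the heat series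
may be differentiated termwise once in `t` and twice in `z`; both give `∑ⱼ f⁽²ʲ⁺²⁾(z) tʲ / j!`.
-/

open Filter Finset
open scoped Nat

theorem Nat.factorial_add_le_pow_mul_factorial (s k : ℕ) : (s + k)! ≤ (s + k) ^ s * k ! := by
  have h := Nat.factorial_mul_descFactorial (n := s + k) (k := s) (by omega)
  rw [Nat.add_sub_cancel_left] at h
  rw [← h, mul_comm]
  exact Nat.mul_le_mul_right _ (Nat.descFactorial_le_pow _ _)

theorem Nat.factorial_add_le_two_pow_mul (a b : ℕ) : (a + b)! ≤ 2 ^ (a + b) * (a ! * b !) := by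
  rw [← Nat.add_choose_mul_factorial_mul_factorial, mul_assoc]
  exact Nat.mul_le_mul_right _ (Nat.choose_le_two_pow _ _)

theorem Nat.factorial_two_mul_add_sq_le (j k : ℕ) :
    (2 * j + k)! ^ 2 ≤ 4 ^ (2 * j + k) * (2 * j + k) ^ (2 * j + k) * (j ! * k !) ^ 2 := by
  set M := 2 * j + k
  have hfac : M ! ≤ 2 ^ M * M ^ j * (j ! * k !) :=
    calc M ! ≤ 2 ^ M * (j ! * (j + k)!) := by
          rw [show M = j + (j + k) by omega]
          exact Nat.factorial_add_le_two_pow_mul j (j + k)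
      _ ≤ 2 ^ M * (j ! * (M ^ j * k !)) := by
          gcongr
          exact (Nat.factorial_add_le_pow_mul_factorial j k).trans
            (Nat.mul_le_mul_right _ (Nat.pow_le_pow_left (by omega) _))
      _ = 2 ^ M * M ^ j * (j ! * k !) := by ring
  have hpow : M ^ (2 * j) ≤ M ^ M := by
    rcases Nat.eq_zero_or_pos M with hM | hM
    · rw [hM, show j = 0 by omega]
    · exact Nat.pow_le_pow_right hM (by omega)
  calc M ! ^ 2 ≤ (2 ^ M * M ^ j * (j ! * k !)) ^ 2 := Nat.pow_le_pow_left hfac 2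
    _ = 4 ^ M * M ^ (2 * j) * (j ! * k !) ^ 2 := by
        rw [show (4 : ℕ) = 2 ^ 2 by rfl, ← pow_mul]
        ring
    _ ≤ 4 ^ M * M ^ M * (j ! * k !) ^ 2 := by gcongr

theorem eventually_pow_mul_sq_le_of_limsup_eq_zero {c : ℕ → ℝ} (hc : ∀ n, 0 ≤ c n)
    (h : limsup (fun n : ℕ => (((n : ℝ) * c n ^ (2 / (n : ℝ)) : ℝ) : EReal)) atTop = 0)
    {ε : ℝ} (hε : 0 < ε) : ∀ᶠ n : ℕ in atTop, (n : ℝ) ^ n * c n ^ 2 ≤ ε ^ n := by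
  have hlt := eventually_lt_of_limsup_lt (h.trans_lt (EReal.coe_pos.mpr hε))
  filter_upwards [hlt, eventually_ge_atTop 1] with n hn hn1
  have hn0 : (n : ℝ) ≠ 0 := Nat.cast_ne_zero.mpr (by omega)
  have hroot : (c n ^ (2 / (n : ℝ))) ^ n = c n ^ 2 := by
    rw [← Real.rpow_natCast, ← Real.rpow_mul (hc n), div_mul_cancel₀ _ hn0, Real.rpow_two]
  calc (n : ℝ) ^ n * c n ^ 2 = ((n : ℝ) * c n ^ (2 / (n : ℝ))) ^ n := by rw [mul_pow, hroot]
    _ ≤ ε ^ n := pow_le_pow_left₀ (mul_nonneg n.cast_nonneg (Real.rpow_nonneg (hc n) _))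
        (EReal.coe_lt_coe_iff.mp hn).le n

theorem exists_pow_mul_sq_le_of_limsup_eq_zero {c : ℕ → ℝ} (hc : ∀ n, 0 ≤ c n)
    (h : limsup (fun n : ℕ => (((n : ℝ) * c n ^ (2 / (n : ℝ)) : ℝ) : EReal)) atTop = 0)
    {ε : ℝ} (hε : 0 < ε) : ∃ C > 0, ∀ n : ℕ, (n : ℝ) ^ n * c n ^ 2 ≤ C * ε ^ n := by
  have hO : (fun n : ℕ => (n : ℝ) ^ n * c n ^ 2) =O[atTop] fun n => ε ^ n := by
    refine Asymptotics.IsBigO.of_bound 1 ?_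
    filter_upwards [eventually_pow_mul_sq_le_of_limsup_eq_zero hc h hε] with n hn
    rwa [Real.norm_of_nonneg (by positivity), Real.norm_of_nonneg (by positivity), one_mul]
  obtain ⟨C, hC0, hC⟩ := Asymptotics.bound_of_isBigO_nat_atTop hO
  refine ⟨C, hC0, fun n => ?_⟩
  have := hC (pow_ne_zero n hε.ne')
  rwa [Real.norm_of_nonneg (by positivity), Real.norm_of_nonneg (by positivity)] at this

theorem HasSum.sum_antidiagonal {E : Type*} [AddCommMonoid E] [TopologicalSpace E]
    [ContinuousAdd E] [RegularSpace E] {g : ℕ × ℕ → E} {a : E} (hg : HasSum g a) :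
    HasSum (fun n => ∑ p ∈ antidiagonal n, g p) a := by
  refine (HasAntidiagonal.sigmaAntidiagonalEquivProd.hasSum_iff.mpr hg).sigma fun n => ?_
  rw [← Finset.sum_coe_sort]
  exact hasSum_fintype _

theorem summable_norm_mul_pow_of_forall_le {E : Type*} [SeminormedAddCommGroup E]
    {a : ℕ × ℕ → E} (ha : ∀ δ > 0, ∃ C, ∀ p, ‖a p‖ ≤ C * δ ^ (p.1 + p.2)) (r : ℝ) :
    Summable fun p : ℕ × ℕ => ‖a p‖ * r ^ (p.1 + p.2) := by
  set δ := 1 / (2 * (|r| + 1))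
  obtain ⟨C, hC⟩ := ha δ (by positivity)
  have hC0 : 0 ≤ C := by simpa using (norm_nonneg _).trans (hC (0, 0))
  have hδr : δ * |r| ≤ 1 / 2 := by
    rw [div_mul_eq_mul_div, div_le_div_iff₀ (by positivity) two_pos]
    linarith [abs_nonneg r]
  have hgeom : Summable fun p : ℕ × ℕ => C * ((1 / 2 : ℝ) ^ p.1 * (1 / 2) ^ p.2) :=
    (summable_geometric_two.mul_of_nonneg summable_geometric_two (fun _ => by positivity)
      fun _ => by positivity).mul_left C
  refine .of_norm_bounded hgeom fun p => ?_
  rw [norm_mul, norm_norm, norm_pow, Real.norm_eq_abs, ← pow_add]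
  calc ‖a p‖ * |r| ^ (p.1 + p.2) ≤ C * δ ^ (p.1 + p.2) * |r| ^ (p.1 + p.2) := by
        gcongr
        exact hC p
    _ = C * (δ * |r|) ^ (p.1 + p.2) := by rw [mul_pow, mul_assoc]
    _ ≤ C * (1 / 2) ^ (p.1 + p.2) := by gcongr

section Bivariate

open ContinuousLinearMap

variable {𝕜 : Type*} [NontriviallyNormedField 𝕜]

noncomputable def bivariateMonomial (n j : ℕ) :
    ContinuousMultilinearMap 𝕜 (fun _ : Fin n => 𝕜 × 𝕜) 𝕜 :=
  (ContinuousMultilinearMap.mkPiAlgebraFin 𝕜 n 𝕜).compContinuousLinearMap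
    fun i => if (i : ℕ) < j then fst 𝕜 𝕜 𝕜 else snd 𝕜 𝕜 𝕜

lemma bivariateMonomial_apply_diag {n j : ℕ} (hj : j ≤ n) (x : 𝕜 × 𝕜) :
    bivariateMonomial n j (fun _ => x) = x.1 ^ j * x.2 ^ (n - j) := by
  have hite : ∀ i : Fin n, (if (i : ℕ) < j then fst 𝕜 𝕜 𝕜 else snd 𝕜 𝕜 𝕜) x =
      if (i : ℕ) < j then x.1 else x.2 := fun i => by split_ifs <;> rfl
  simp only [bivariateMonomial, ContinuousMultilinearMap.compContinuousLinearMap_apply,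
    ContinuousMultilinearMap.mkPiAlgebraFin_apply, List.prod_ofFn, hite]
  rw [Fin.prod_univ_eq_prod_range (fun i => if i < j then x.1 else x.2) n, prod_ite,
    prod_const, prod_const]
  have hlt : (range n).filter (· < j) = range j := by ext; simp; omega
  have hge : (range n).filter (¬ · < j) = Ico j n := by ext; simp; omega
  rw [hlt, hge, card_range, Nat.card_Ico]

lemma norm_bivariateMonomial_le (n j : ℕ) :
    ‖(bivariateMonomial n j : ContinuousMultilinearMap 𝕜 (fun _ : Fin n => 𝕜 × 𝕜) 𝕜)‖ ≤ 1 := by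
  refine (ContinuousMultilinearMap.norm_compContinuousLinearMap_le _ _).trans ?_
  refine mul_le_one₀ (ContinuousMultilinearMap.norm_mkPiAlgebraFin_le.trans (by simp))
    (by positivity) (prod_le_one (fun _ _ => norm_nonneg _) fun i _ => ?_)
  split_ifs
  · exact norm_fst_le 𝕜 𝕜 𝕜
  · exact norm_snd_le 𝕜 𝕜 𝕜

/-- The formal power series of `(x, y) ↦ ∑ a (j, k) * x ^ j * y ^ k`, grouped by total degree. -/
noncomputable def bivariateSeries (a : ℕ × ℕ → 𝕜) : FormalMultilinearSeries 𝕜 (𝕜 × 𝕜) 𝕜 :=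
  fun n => ∑ p ∈ antidiagonal n, a p • bivariateMonomial n p.1

lemma bivariateSeries_apply_diag (a : ℕ × ℕ → 𝕜) (n : ℕ) (x : 𝕜 × 𝕜) :
    bivariateSeries a n (fun _ => x) = ∑ p ∈ antidiagonal n, a p * x.1 ^ p.1 * x.2 ^ p.2 := by
  simp only [bivariateSeries, _root_.sum_apply, smul_apply, smul_eq_mul]
  refine sum_congr rfl fun p hp => ?_
  rw [HasAntidiagonal.mem_antidiagonal] at hp
  rw [bivariateMonomial_apply_diag (by omega), mul_assoc, show n - p.1 = p.2 by omega]

lemma norm_bivariateSeries_le (a : ℕ × ℕ → 𝕜) (n : ℕ) :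
    ‖bivariateSeries a n‖ ≤ ∑ p ∈ antidiagonal n, ‖a p‖ :=
  (norm_sum_le _ _).trans <| sum_le_sum fun p _ => by
    rw [norm_smul]
    exact mul_le_of_le_one_right (norm_nonneg _) (norm_bivariateMonomial_le _ _)

variable {a : ℕ × ℕ → 𝕜} (ha : ∀ r : ℝ, Summable fun p : ℕ × ℕ => ‖a p‖ * r ^ (p.1 + p.2))
include ha

lemma summable_norm_mul_pow_mul_pow {x y : ℝ} (hx : 0 ≤ x) (hy : 0 ≤ y) :
    Summable fun p : ℕ × ℕ => ‖a p‖ * x ^ p.1 * y ^ p.2 :=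
  (ha (max x y)).of_nonneg_of_le (fun _ => by positivity) fun p => by
    rw [mul_assoc, pow_add]
    gcongr
    exacts [le_max_left x y, le_max_right x y]

lemma summable_mul_pow_mul_pow [CompleteSpace 𝕜] (x y : 𝕜) :
    Summable fun p : ℕ × ℕ => a p * x ^ p.1 * y ^ p.2 :=
  .of_norm <| (summable_norm_mul_pow_mul_pow ha (norm_nonneg x) (norm_nonneg y)).congr fun p => by
    simp only [norm_mul, norm_pow]

lemma radius_bivariateSeries : (bivariateSeries a).radius = ⊤ := by
  refine (bivariateSeries a).radius_eq_top_of_summable_norm fun r => ?_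
  refine ((ha r).hasSum.sum_antidiagonal.summable).of_nonneg_of_le (fun _ => by positivity)
    fun n => ?_
  rw [← sum_congr rfl fun p hp => by rw [HasAntidiagonal.mem_antidiagonal.mp hp], ← sum_mul]
  exact mul_le_mul_of_nonneg_right (norm_bivariateSeries_le a n) (by positivity)

theorem analyticOnNhd_tsum_mul_pow_mul_pow [CompleteSpace 𝕜] :
    AnalyticOnNhd 𝕜 (fun x : 𝕜 × 𝕜 => ∑' p : ℕ × ℕ, a p * x.1 ^ p.1 * x.2 ^ p.2) Set.univ := by
  have hseries : HasFPowerSeriesOnBall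
      (fun x : 𝕜 × 𝕜 => ∑' p : ℕ × ℕ, a p * x.1 ^ p.1 * x.2 ^ p.2) (bivariateSeries a) 0 ⊤ := by
    refine ⟨(radius_bivariateSeries ha).ge, ENNReal.zero_lt_top, fun {y} _ => ?_⟩
    simpa only [bivariateSeries_apply_diag, zero_add] using
      (summable_mul_pow_mul_pow ha y.1 y.2).hasSum.sum_antidiagonal
  exact fun x _ => hseries.analyticAt_of_mem (by simp)

end Bivariate

theorem iteratedDeriv_iteratedDeriv {𝕜 F : Type*} [NontriviallyNormedField 𝕜]
    [NormedAddCommGroup F] [NormedSpace 𝕜 F] (m k : ℕ) (f : 𝕜 → F) :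
    iteratedDeriv k (iteratedDeriv m f) = iteratedDeriv (m + k) f := by
  rw [add_comm]
  simp only [iteratedDeriv_eq_iterate, Function.iterate_add_apply]

theorem deriv_tsum_mul_pow_div_factorial {b : ℕ → ℂ}
    (hb : ∀ s : ℂ, Summable fun j => ‖b j * s ^ j / (j ! : ℂ)‖) (t : ℂ) :
    deriv (fun s => ∑' j, b j * s ^ j / (j ! : ℂ)) t = ∑' j, b (j + 1) * t ^ j / (j ! : ℂ) := by
  set R := ‖t‖ + 1
  have hbound : ∀ j, ∀ s ∈ Metric.ball (0 : ℂ) R,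
      ‖b j * s ^ j / (j ! : ℂ)‖ ≤ ‖b j * (R : ℂ) ^ j / (j ! : ℂ)‖ := by
    intro j s hs
    rw [mem_ball_zero_iff] at hs
    simp only [norm_div, norm_mul, norm_pow, Complex.norm_real, Real.norm_eq_abs,
      abs_of_pos (by positivity : 0 < R)]
    gcongr
  have HS := Complex.hasSum_deriv_of_summable_norm (hb R)
    (fun j => (((differentiable_pow j).const_mul _).div_const _).differentiableOn)
    Metric.isOpen_ball hbound (mem_ball_zero_iff.mpr (lt_add_one _))
  have hterm : ∀ j, deriv (fun s : ℂ => b j * s ^ j / (j ! : ℂ)) t =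
      b j * (j * t ^ (j - 1)) / (j ! : ℂ) := fun j => by
    rw [deriv_div_const, deriv_const_mul _ (differentiable_pow j).differentiableAt,
      deriv_pow_field]
  have HS₁ := (hasSum_nat_add_iff' 1).mpr HS
  rw [sum_range_one, hterm 0, Nat.cast_zero, zero_mul, mul_zero, zero_div, sub_zero] at HS₁
  rw [← HS₁.tsum_eq]
  refine tsum_congr fun j => ?_
  rw [hterm, Nat.factorial_succ]
  push_cast
  field_simp

/-- The coefficient of `tʲ zᵏ` in `∑ⱼ f⁽²ʲ⁾(z) tʲ / j!`. -/
noncomputable def heatCoeff (f : ℂ → ℂ) (p : ℕ × ℕ) : ℂ :=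
  iteratedDeriv (2 * p.1 + p.2) f 0 / (p.1 ! * p.2 ! : ℂ)

theorem heatCoeff_deriv (f : ℂ → ℂ) (j k : ℕ) :
    heatCoeff (deriv f) (j, k) = (k + 1) * heatCoeff f (j, k + 1) := by
  simp only [heatCoeff, ← iteratedDeriv_succ', Nat.factorial_succ]
  push_cast
  field_simp
  ring_nf

theorem heatCoeff_le_of_limsup_eq_zero {f : ℂ → ℂ}
    (h : limsup (fun n : ℕ =>
      (((n : ℝ) * ‖iteratedDeriv n f 0 / (n ! : ℂ)‖ ^ (2 / (n : ℝ)) : ℝ) : EReal)) atTop = 0) :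
    ∀ δ > 0, ∃ C, ∀ p, ‖heatCoeff f p‖ ≤ C * δ ^ (p.1 + p.2) := by
  intro δ hδ
  set δ₀ := min δ 1
  have hδ₀ : 0 < δ₀ := lt_min hδ one_pos
  obtain ⟨C, hC0, hC⟩ := exists_pow_mul_sq_le_of_limsup_eq_zero (fun _ => norm_nonneg _) h
    (ε := δ₀ ^ 2 / 4) (by positivity)
  refine ⟨√C, fun ⟨j, k⟩ => ?_⟩
  set M := 2 * j + k
  set c := ‖iteratedDeriv M f 0 / (M ! : ℂ)‖
  have hfac : ((M ! : ℕ) : ℝ) ^ 2 ≤ 4 ^ M * (M : ℝ) ^ M * ((j ! : ℕ) * (k ! : ℕ)) ^ 2 := by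
    exact_mod_cast Nat.factorial_two_mul_add_sq_le j k
  have hcoeff : ‖heatCoeff f (j, k)‖ * (j ! * k !) = c * M ! := by
    simp only [heatCoeff, c, M, norm_div, norm_mul, Complex.norm_natCast]
    field_simp
  have hpow : (4 : ℝ) ^ M * (δ₀ ^ 2 / 4) ^ M = (δ₀ ^ M) ^ 2 := by
    rw [← mul_pow, mul_div_cancel₀ _ four_ne_zero, ← pow_mul, ← pow_mul, mul_comm]
  have hsq : (‖heatCoeff f (j, k)‖ * (j ! * k !)) ^ 2 ≤ (√C * δ₀ ^ M * (j ! * k !)) ^ 2 :=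
    calc (‖heatCoeff f (j, k)‖ * (j ! * k !)) ^ 2 = c ^ 2 * (M ! : ℝ) ^ 2 := by
          rw [hcoeff, mul_pow]
      _ ≤ c ^ 2 * (4 ^ M * (M : ℝ) ^ M * (j ! * k !) ^ 2) := by gcongr
      _ = 4 ^ M * ((M : ℝ) ^ M * c ^ 2) * (j ! * k !) ^ 2 := by ring
      _ ≤ 4 ^ M * (C * (δ₀ ^ 2 / 4) ^ M) * (j ! * k !) ^ 2 := by grw [hC M]
      _ = (√C * δ₀ ^ M * (j ! * k !)) ^ 2 := by
          rw [mul_pow (√C * δ₀ ^ M), mul_pow √C, Real.sq_sqrt hC0.le, ← hpow]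
          ring
  calc ‖heatCoeff f (j, k)‖ ≤ √C * δ₀ ^ M := le_of_mul_le_mul_right
        ((pow_le_pow_iff_left₀ (by positivity) (by positivity) two_ne_zero).mp hsq) (by positivity)
    _ ≤ √C * δ₀ ^ (j + k) :=
        mul_le_mul_of_nonneg_left (pow_le_pow_of_le_one hδ₀.le (min_le_right δ 1) (by omega))
          (Real.sqrt_nonneg C)
    _ ≤ √C * δ ^ (j + k) := by
        gcongr
        exact min_le_left δ 1

theorem heatCoeff_deriv_le {f : ℂ → ℂ}
    (hf : ∀ δ > 0, ∃ C, ∀ p, ‖heatCoeff f p‖ ≤ C * δ ^ (p.1 + p.2)) :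
    ∀ δ > 0, ∃ C, ∀ p, ‖heatCoeff (deriv f) p‖ ≤ C * δ ^ (p.1 + p.2) := by
  intro δ hδ
  obtain ⟨C, hC⟩ := hf (δ / 2) (by positivity)
  refine ⟨C * δ, fun ⟨j, k⟩ => ?_⟩
  have hk : (k + 1 : ℝ) ≤ 2 ^ (j + (k + 1)) := by
    exact_mod_cast (Nat.lt_two_pow_self (n := k + 1)).le.trans
      (Nat.pow_le_pow_right two_pos (by omega))
  rw [heatCoeff_deriv, norm_mul, show ‖(k + 1 : ℂ)‖ = k + 1 by norm_cast]
  calc (k + 1 : ℝ) * ‖heatCoeff f (j, k + 1)‖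
      ≤ 2 ^ (j + (k + 1)) * (C * (δ / 2) ^ (j + (k + 1))) := by
        gcongr
        exact hC (j, k + 1)
    _ = C * δ * δ ^ (j + k) := by
        rw [div_pow]
        field_simp
        ring

noncomputable def heatFlow (f : ℂ → ℂ) (t z : ℂ) : ℂ :=
  ∑' j : ℕ, iteratedDeriv (2 * j) f z * t ^ j / (j ! : ℂ)

theorem heatFlow_zero_left (f : ℂ → ℂ) (z : ℂ) : heatFlow f 0 z = f z := by
  rw [heatFlow, tsum_eq_single 0 fun j hj => by simp [zero_pow hj]]
  simp

section HeatFlow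

variable {f : ℂ → ℂ} (hf : Differentiable ℂ f)
include hf

theorem hasSum_heatCoeff_mul_pow_mul_pow (j : ℕ) (t z : ℂ) :
    HasSum (fun k => heatCoeff f (j, k) * t ^ j * z ^ k)
      (iteratedDeriv (2 * j) f z * t ^ j / (j ! : ℂ)) := by
  have h := (Complex.hasSum_taylorSeries_of_entire
    (hf.contDiff.differentiable_iteratedDeriv' (2 * j)) 0 z).mul_right (t ^ j / (j ! : ℂ))
  rw [mul_div_assoc]
  refine h.congr_fun fun k => ?_
  simp only [heatCoeff, iteratedDeriv_iteratedDeriv, sub_zero, smul_eq_mul]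
  field_simp

variable (hs : ∀ r : ℝ, Summable fun p : ℕ × ℕ => ‖heatCoeff f p‖ * r ^ (p.1 + p.2))
include hs

theorem hasSum_heatFlow (t z : ℂ) :
    HasSum (fun p : ℕ × ℕ => heatCoeff f p * t ^ p.1 * z ^ p.2) (heatFlow f t z) := by
  have hsum := (summable_mul_pow_mul_pow hs t z).hasSum
  rwa [heatFlow, (hsum.prod_fiberwise (hasSum_heatCoeff_mul_pow_mul_pow hf · t z)).tsum_eq]

theorem norm_heatFlow_term_le (j : ℕ) (t : ℂ) {w : ℂ} {R : ℝ} (hw : ‖w‖ ≤ R) :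
    ‖iteratedDeriv (2 * j) f w * t ^ j / (j ! : ℂ)‖ ≤
      ∑' k, ‖heatCoeff f (j, k)‖ * ‖t‖ ^ j * R ^ k := by
  have hR : 0 ≤ R := (norm_nonneg w).trans hw
  rw [← (hasSum_heatCoeff_mul_pow_mul_pow hf j t w).tsum_eq]
  refine tsum_of_norm_bounded
    ((summable_norm_mul_pow_mul_pow hs (norm_nonneg t) hR).prod_factor j).hasSum fun k => ?_
  simp only [norm_mul, norm_pow]
  gcongr

theorem summable_norm_heatFlow_term (t z : ℂ) :
    Summable fun j : ℕ => ‖iteratedDeriv (2 * j) f z * t ^ j / (j ! : ℂ)‖ :=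
  (summable_norm_mul_pow_mul_pow hs (norm_nonneg t) (norm_nonneg z)).prod.of_nonneg_of_le
    (fun _ => norm_nonneg _) fun j => norm_heatFlow_term_le hf hs j t le_rfl

theorem analyticOnNhd_heatFlow :
    AnalyticOnNhd ℂ (fun x : ℂ × ℂ => heatFlow f x.1 x.2) Set.univ := by
  have h : (fun x : ℂ × ℂ => heatFlow f x.1 x.2) =
      fun x => ∑' p : ℕ × ℕ, heatCoeff f p * x.1 ^ p.1 * x.2 ^ p.2 :=
    funext fun x => (hasSum_heatFlow hf hs x.1 x.2).tsum_eq.symm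
  rw [h]
  exact analyticOnNhd_tsum_mul_pow_mul_pow hs

theorem deriv_heatFlow_right (t z : ℂ) :
    deriv (fun w => heatFlow f t w) z = heatFlow (deriv f) t z := by
  set R := ‖z‖ + 1
  have hdiff (j : ℕ) : Differentiable ℂ (iteratedDeriv (2 * j) f) :=
    hf.contDiff.differentiable_iteratedDeriv' _
  have HS := Complex.hasSum_deriv_of_summable_norm
    (summable_norm_mul_pow_mul_pow hs (norm_nonneg t) (by positivity : 0 ≤ R)).prod
    (fun j => (((hdiff j).mul_const _).div_const _).differentiableOn) Metric.isOpen_ball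
    (fun j w hw => norm_heatFlow_term_le hf hs j t (mem_ball_zero_iff.mp hw).le)
    (mem_ball_zero_iff.mpr (lt_add_one _))
  unfold heatFlow
  rw [← HS.tsum_eq]
  refine tsum_congr fun j => ?_
  rw [deriv_div_const, deriv_mul_const (hdiff j).differentiableAt, ← iteratedDeriv_succ,
    iteratedDeriv_succ']

theorem deriv_heatFlow_left (t z : ℂ) :
    deriv (fun s => heatFlow f s z) t = heatFlow (deriv (deriv f)) t z := by
  unfold heatFlow
  rw [deriv_tsum_mul_pow_div_factorial (summable_norm_heatFlow_term hf hs · z)]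
  refine tsum_congr fun j => ?_
  rw [show 2 * (j + 1) = 2 * j + 1 + 1 by ring, iteratedDeriv_succ', iteratedDeriv_succ']

end HeatFlow

/-- If `f` is entire with Taylor coefficients `c_k = f⁽ᵏ⁾(0)/k!` satisfying
`limsup_n n |c_n|^{2/n} = 0`, then the series `F(t,z) = Σ_j f⁽²ʲ⁾(z) tʲ/j!` converges
absolutely for every `(t,z)`, defines a function analytic on all of `ℂ²`, satisfies the heat
equation `∂_t F = ∂_z² F` everywhere, and has initial condition `F(0,z) = f(z)`. -/
theorem heatSeries_entire_caloric_of_small_coefficients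
    (f : ℂ → ℂ) (hf : Differentiable ℂ f)
    (h : Filter.limsup
        (fun n : ℕ =>
          (((n : ℝ) * ‖iteratedDeriv n f 0 / (n.factorial : ℂ)‖ ^ (2 / (n : ℝ)) : ℝ) :
            EReal))
        Filter.atTop = (0 : EReal)) :
    (∀ t z : ℂ,
      Summable fun j : ℕ => ‖iteratedDeriv (2 * j) f z * t ^ j / (j.factorial : ℂ)‖) ∧
    AnalyticOnNhd ℂ
      (fun p : ℂ × ℂ => ∑' j : ℕ, iteratedDeriv (2 * j) f p.2 * p.1 ^ j / (j.factorial : ℂ))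
      Set.univ ∧
    (∀ t z : ℂ,
      deriv (fun s => ∑' j : ℕ, iteratedDeriv (2 * j) f z * s ^ j / (j.factorial : ℂ)) t =
        iteratedDeriv 2
          (fun w => ∑' j : ℕ, iteratedDeriv (2 * j) f w * t ^ j / (j.factorial : ℂ)) z) ∧
    (∀ z : ℂ, (∑' j : ℕ, iteratedDeriv (2 * j) f z * (0 : ℂ) ^ j / (j.factorial : ℂ)) = f z) := by
  have hδ := heatCoeff_le_of_limsup_eq_zero h
  have hs := summable_norm_mul_pow_of_forall_le hδ
  have hs' := summable_norm_mul_pow_of_forall_le (heatCoeff_deriv_le hδ)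
  refine ⟨summable_norm_heatFlow_term hf hs, analyticOnNhd_heatFlow hf hs, fun t z => ?_,
    heatFlow_zero_left f⟩
  have hspace : deriv (fun w => heatFlow f t w) = fun w => heatFlow (deriv f) t w :=
    funext (deriv_heatFlow_right hf hs t)
  change deriv (fun s => heatFlow f s z) t = iteratedDeriv 2 (fun w => heatFlow f t w) z
  rw [deriv_heatFlow_left hf hs, iteratedDeriv_succ, iteratedDeriv_one, hspace,
    deriv_heatFlow_right hf.deriv hs']
end

section
/- Let F : ℂ × ℂ → ℂ be an entire caloric function which is not identically zero. If F(t*, z*) = 0 and ∂_z F(t*, z*) = 0 for some point (t*, z*) ∈ ℂ², then there is an open neighborhood U of (t*, z*) in ℂ² such that |F(t,z)| + |∂_z F(t,z)| > 0 for every (t,z) ∈ U \ {(t*, z*)}. Consequently, the set M_F := {(t,z) ∈ ℂ² : F(t,z) = ∂_z F(t,z) = 0} of multiple zeros of F (viewed as a function of z) is a discrete subset of ℂ². -/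
/-!
Let `c n = ∂_z^n F (t*, z*)`. The heat equation turns `∂_t^j ∂_z^k F` into `∂_z^(2j+k) F`, so
`F (t* + s, z* + w) = ∑ c (2j+k) s^j w^k / (j! k!)`, and Cauchy's estimate in `t` bounds
`‖c n‖ ≤ A ⌊n/2⌋!`, which makes this double series converge when the parabolic norm
`ρ = max √‖s‖ ‖w‖` is small. If `m` is the first index with `c m ≠ 0` (it exists as `F ≢ 0`, and
`m ≥ 1` at a zero of `F`), then `F = c m h_m + O(ρ^(m+1))` and `∂_z F = c m h_(m-1) + O(ρ^m)`,
where `h_d = ∑_{2j+k=d} s^j w^k / (j! k!)` is the heat polynomial. The recurrence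
`d h_d = w h_(d-1) + 2 s h_(d-2)` shows that `h_m` and `h_(m-1)` vanish together only at the origin,
so parabolic homogeneity and compactness give `‖h_m‖ + ρ ‖h_(m-1)‖ ≥ δ ρ^m`, which beats the
error terms for small `ρ`.
-/

open Filter MeasureTheory

open Topology
open scoped Nat

noncomputable section

def partialT (G : ℂ × ℂ → ℂ) : ℂ × ℂ → ℂ := fun p => fderiv ℂ G p (1, 0)

def partialZ (G : ℂ × ℂ → ℂ) : ℂ × ℂ → ℂ := fun p => fderiv ℂ G p (0, 1)

section PartialDerivatives

variable {G : ℂ × ℂ → ℂ}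

theorem analyticOnNhd_partialT {U : Set (ℂ × ℂ)} (hG : AnalyticOnNhd ℂ G U) :
    AnalyticOnNhd ℂ (partialT G) U :=
  ((ContinuousLinearMap.apply ℂ ℂ ((1, 0) : ℂ × ℂ)).analyticOnNhd _).comp hG.fderiv
    (Set.mapsTo_univ _ _)

theorem analyticOnNhd_partialZ {U : Set (ℂ × ℂ)} (hG : AnalyticOnNhd ℂ G U) :
    AnalyticOnNhd ℂ (partialZ G) U :=
  ((ContinuousLinearMap.apply ℂ ℂ ((0, 1) : ℂ × ℂ)).analyticOnNhd _).comp hG.fderiv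
    (Set.mapsTo_univ _ _)

theorem deriv_sliceT_eq_partialT {t z : ℂ} (hG : DifferentiableAt ℂ G (t, z)) :
    deriv (fun s => G (s, z)) t = partialT G (t, z) :=
  (hG.hasFDerivAt.comp_hasDerivAt t
    ((hasDerivAt_id t).prodMk (hasDerivAt_const t z))).deriv

theorem deriv_sliceZ_eq_partialZ {t z : ℂ} (hG : DifferentiableAt ℂ G (t, z)) :
    deriv (fun w => G (t, w)) z = partialZ G (t, z) :=
  (hG.hasFDerivAt.comp_hasDerivAt z
    ((hasDerivAt_const z t).prodMk (hasDerivAt_id z))).deriv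

theorem differentiable_sliceT (hG : AnalyticOnNhd ℂ G Set.univ) (z : ℂ) :
    Differentiable ℂ (fun s => G (s, z)) := fun s =>
  (hG _ trivial).differentiableAt.comp s (differentiableAt_id.prodMk (differentiableAt_const _))

theorem differentiable_sliceZ (hG : AnalyticOnNhd ℂ G Set.univ) (t : ℂ) :
    Differentiable ℂ (fun w => G (t, w)) := fun w =>
  (hG _ trivial).differentiableAt.comp w ((differentiableAt_const _).prodMk differentiableAt_id)

theorem partialT_partialZ (hG : AnalyticOnNhd ℂ G Set.univ) :
    partialT (partialZ G) = partialZ (partialT G) := by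
  funext p
  have hdiff : DifferentiableAt ℂ (fderiv ℂ G) p := (hG.fderiv p trivial).differentiableAt
  have hsymm : IsSymmSndFDerivAt ℂ G p :=
    (hG p trivial).contDiffAt.isSymmSndFDerivAt (n := ⊤) le_top
  have hcurry : ∀ u v : ℂ × ℂ, fderiv ℂ (fun q => fderiv ℂ G q v) p u
      = fderiv ℂ (fderiv ℂ G) p u v := fun u v =>
    congrArg (· u) ((ContinuousLinearMap.apply ℂ ℂ v).hasFDerivAt.comp p
      hdiff.hasFDerivAt).fderiv
  exact (hcurry _ _).trans ((hsymm _ _).trans (hcurry _ _).symm)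

theorem analyticOnNhd_partialT_iterate {U : Set (ℂ × ℂ)} (hG : AnalyticOnNhd ℂ G U) (n : ℕ) :
    AnalyticOnNhd ℂ (partialT^[n] G) U := by
  induction n with
  | zero => exact hG
  | succ n ih => rw [Function.iterate_succ_apply']; exact analyticOnNhd_partialT ih

theorem analyticOnNhd_partialZ_iterate {U : Set (ℂ × ℂ)} (hG : AnalyticOnNhd ℂ G U) (n : ℕ) :
    AnalyticOnNhd ℂ (partialZ^[n] G) U := by
  induction n with
  | zero => exact hG
  | succ n ih => rw [Function.iterate_succ_apply']; exact analyticOnNhd_partialZ ih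

theorem iteratedDeriv_sliceT_eq_partialT_iterate (hG : AnalyticOnNhd ℂ G Set.univ) (n : ℕ)
    (t z : ℂ) : iteratedDeriv n (fun s => G (s, z)) t = partialT^[n] G (t, z) := by
  induction n generalizing t with
  | zero => rfl
  | succ n ih =>
    rw [iteratedDeriv_succ, funext ih, Function.iterate_succ_apply',
      deriv_sliceT_eq_partialT ((analyticOnNhd_partialT_iterate hG n _ trivial).differentiableAt)]

theorem iteratedDeriv_sliceZ_eq_partialZ_iterate (hG : AnalyticOnNhd ℂ G Set.univ) (n : ℕ)
    (t z : ℂ) : iteratedDeriv n (fun w => G (t, w)) z = partialZ^[n] G (t, z) := by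
  induction n generalizing z with
  | zero => rfl
  | succ n ih =>
    rw [iteratedDeriv_succ, funext ih, Function.iterate_succ_apply',
      deriv_sliceZ_eq_partialZ ((analyticOnNhd_partialZ_iterate hG n _ trivial).differentiableAt)]

theorem partialT_partialZ_iterate (n : ℕ) (hG : AnalyticOnNhd ℂ G Set.univ) :
    partialT (partialZ^[n] G) = partialZ^[n] (partialT G) := by
  induction n generalizing G with
  | zero => rfl
  | succ n ih =>
    rw [Function.iterate_succ_apply, ih (analyticOnNhd_partialZ hG), partialT_partialZ hG,
      ← Function.iterate_succ_apply]

end PartialDerivatives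

section EntireFunctions

variable {E : Type*} [NormedAddCommGroup E] [NormedSpace ℂ E] [CompleteSpace E] {g : ℂ → E}

theorem exists_norm_iteratedDeriv_le_factorial_mul (hg : Differentiable ℂ g) (c : ℂ) :
    ∃ B : ℝ, ∀ n : ℕ, ‖iteratedDeriv n g c‖ ≤ n ! * B := by
  obtain ⟨B, hB⟩ := (isCompact_sphere c 1).exists_bound_of_continuousOn hg.continuous.continuousOn
  refine ⟨B, fun n => ?_⟩
  simpa using Complex.norm_iteratedDeriv_le_of_forall_mem_sphere_norm_le n one_pos
    hg.diffContOnCl hB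

theorem eq_zero_of_iteratedDeriv_eq_zero (hg : Differentiable ℂ g) {c : ℂ}
    (h : ∀ n, iteratedDeriv n g c = 0) : g = 0 := by
  funext z
  simp [← Complex.taylorSeries_eq_of_entire hg c z, h]

end EntireFunctions

namespace IsEntireCaloric

variable {F : ℂ × ℂ → ℂ}

theorem partialT_eq (hF : IsEntireCaloric F) : partialT F = partialZ (partialZ F) := by
  funext ⟨t, z⟩
  rw [← deriv_sliceT_eq_partialT (hF.1 _ trivial).differentiableAt, hF.2 t z,
    iteratedDeriv_sliceZ_eq_partialZ_iterate hF.1 2]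
  rfl

theorem partialZ_iterate (hF : IsEntireCaloric F) (n : ℕ) :
    IsEntireCaloric (partialZ^[n] F) := by
  induction n with
  | zero => exact hF
  | succ n ih =>
    rw [Function.iterate_succ_apply']
    refine ⟨analyticOnNhd_partialZ ih.1, fun t z => ?_⟩
    rw [deriv_sliceT_eq_partialT (analyticOnNhd_partialZ ih.1 _ trivial).differentiableAt,
      iteratedDeriv_sliceZ_eq_partialZ_iterate (analyticOnNhd_partialZ ih.1) 2,
      partialT_partialZ ih.1, ih.partialT_eq]
    rfl

theorem partialT_iterate (hF : IsEntireCaloric F) (j : ℕ) :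
    partialT^[j] F = partialZ^[2 * j] F := by
  induction j with
  | zero => rfl
  | succ j ih =>
    rw [Function.iterate_succ_apply', ih, partialT_partialZ_iterate _ hF.1, hF.partialT_eq,
      show 2 * (j + 1) = 2 * j + 2 by ring, Function.iterate_add_apply]
    rfl

theorem iteratedDeriv_sliceT_eq_partialZ_iterate (hF : IsEntireCaloric F) (j : ℕ) (t z : ℂ) :
    iteratedDeriv j (fun s => F (s, z)) t = partialZ^[2 * j] F (t, z) := by
  rw [iteratedDeriv_sliceT_eq_partialT_iterate hF.1, hF.partialT_iterate]

theorem exists_norm_partialZ_iterate_le (hF : IsEntireCaloric F) (x : ℂ × ℂ) :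
    ∃ A : ℝ, ∀ n : ℕ, ‖partialZ^[n] F x‖ ≤ (n / 2)! * A := by
  have hslice (i : ℕ) : ∃ B : ℝ, ∀ j : ℕ,
      ‖iteratedDeriv j (fun s => partialZ^[i] F (s, x.2)) x.1‖ ≤ j ! * B :=
    exists_norm_iteratedDeriv_le_factorial_mul
      (differentiable_sliceT (hF.partialZ_iterate i).1 x.2) x.1
  choose B hB using hslice
  refine ⟨max (B 0) (B 1), fun n => ?_⟩
  have hn : partialZ^[n] F x = partialZ^[2 * (n / 2)] (partialZ^[n % 2] F) x := by
    rw [← Function.iterate_add_apply, Nat.div_add_mod]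
  rw [hn, ← (hF.partialZ_iterate (n % 2)).iteratedDeriv_sliceT_eq_partialZ_iterate]
  refine (hB _ _).trans (mul_le_mul_of_nonneg_left ?_ (Nat.cast_nonneg _))
  rcases Nat.mod_two_eq_zero_or_one n with h | h <;> simp [h]

theorem eq_zero_of_partialZ_iterate_eq_zero (hF : IsEntireCaloric F) {x : ℂ × ℂ}
    (h : ∀ n, partialZ^[n] F x = 0) : F = 0 := by
  have hsliceZ : (fun w => F (x.1, w)) = 0 :=
    eq_zero_of_iteratedDeriv_eq_zero (differentiable_sliceZ hF.1 x.1) (c := x.2) fun n => by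
      rw [iteratedDeriv_sliceZ_eq_partialZ_iterate hF.1]; exact h n
  funext ⟨t, z⟩
  have hsliceT : (fun s => F (s, z)) = 0 :=
    eq_zero_of_iteratedDeriv_eq_zero (differentiable_sliceT hF.1 z) (c := x.1) fun j => by
      rw [hF.iteratedDeriv_sliceT_eq_partialZ_iterate,
        ← iteratedDeriv_sliceZ_eq_partialZ_iterate hF.1, hsliceZ]
      exact iteratedDeriv_fun_const_zero
  exact congrFun hsliceT t

end IsEntireCaloric

def heatMonomial (s w : ℂ) (p : ℕ × ℕ) : ℂ := s ^ p.1 * w ^ p.2 / (p.1 ! * p.2 !)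

-- `∑_{2j+k=d} s^j w^k / (j! k!)`; the guard `2 * j ≤ d` keeps `d - 2 * j` from truncating.
def heatPoly (d : ℕ) (s w : ℂ) : ℂ :=
  ∑ j ∈ Finset.range (d + 1), if 2 * j ≤ d then heatMonomial s w (j, d - 2 * j) else 0

section HeatPolynomials

variable {s w : ℂ}

theorem succ_mul_heatMonomial_succ_fst (j k : ℕ) :
    (j + 1 : ℂ) * heatMonomial s w (j + 1, k) = s * heatMonomial s w (j, k) := by
  simp only [heatMonomial, Nat.factorial_succ, Nat.cast_mul]
  field_simp
  push_cast
  ring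

theorem succ_mul_heatMonomial_succ_snd (j k : ℕ) :
    (k + 1 : ℂ) * heatMonomial s w (j, k + 1) = w * heatMonomial s w (j, k) := by
  simp only [heatMonomial, Nat.factorial_succ, Nat.cast_mul]
  field_simp
  push_cast
  ring

theorem heatMonomial_scale (c : ℂ) (j k : ℕ) :
    heatMonomial (c ^ 2 * s) (c * w) (j, k) = c ^ (2 * j + k) * heatMonomial s w (j, k) := by
  simp only [heatMonomial]
  ring

theorem heatPoly_zero : heatPoly 0 s w = 1 := by
  simp [heatPoly, heatMonomial]

theorem heatPoly_zero_left (d : ℕ) (w : ℂ) : heatPoly d 0 w = w ^ d / d ! := by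
  rw [heatPoly, Finset.sum_eq_single 0] <;> simp +contextual [heatMonomial]

theorem heatPoly_scale (c : ℂ) (d : ℕ) :
    heatPoly d (c ^ 2 * s) (c * w) = c ^ d * heatPoly d s w := by
  rw [heatPoly, heatPoly, Finset.mul_sum]
  refine Finset.sum_congr rfl fun j _ => ?_
  split_ifs with h
  · rw [heatMonomial_scale, Nat.add_sub_of_le h]
  · rw [mul_zero]

theorem heatPoly_recurrence (d : ℕ) :
    (d + 2 : ℂ) * heatPoly (d + 2) s w = w * heatPoly (d + 1) s w + 2 * s * heatPoly d s w := by
  have hsplit : (d + 2 : ℂ) * heatPoly (d + 2) s w =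
      (∑ j ∈ Finset.range (d + 3), if 2 * j ≤ d + 2 then
        ((d + 2 - 2 * j : ℕ) : ℂ) * heatMonomial s w (j, d + 2 - 2 * j) else 0) +
      ∑ j ∈ Finset.range (d + 3), if 2 * j ≤ d + 2 then
        (2 * j : ℂ) * heatMonomial s w (j, d + 2 - 2 * j) else 0 := by
    rw [heatPoly, Finset.mul_sum, ← Finset.sum_add_distrib]
    refine Finset.sum_congr rfl fun j _ => ?_
    split_ifs with h
    · rw [Nat.cast_sub h]; push_cast; ring
    · simp
  have hw : (∑ j ∈ Finset.range (d + 3), if 2 * j ≤ d + 2 then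
      ((d + 2 - 2 * j : ℕ) : ℂ) * heatMonomial s w (j, d + 2 - 2 * j) else 0) =
      w * heatPoly (d + 1) s w := by
    rw [Finset.sum_range_succ, if_neg (by omega), add_zero, heatPoly, Finset.mul_sum]
    refine Finset.sum_congr rfl fun j _ => ?_
    split_ifs with h₁ h₂ h₂
    · rw [show d + 2 - 2 * j = d + 1 - 2 * j + 1 by omega, ← succ_mul_heatMonomial_succ_snd]
      push_cast
      ring
    · rw [show d + 2 - 2 * j = 0 by omega]; simp
    · omega
    · simp
  have hs : (∑ j ∈ Finset.range (d + 3), if 2 * j ≤ d + 2 then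
      (2 * j : ℂ) * heatMonomial s w (j, d + 2 - 2 * j) else 0) = 2 * s * heatPoly d s w := by
    rw [Finset.sum_range_succ', Finset.sum_range_succ, if_neg (by omega), heatPoly,
      Finset.mul_sum]
    simp only [CharP.cast_eq_zero, mul_zero, zero_mul, ite_self, add_zero]
    refine Finset.sum_congr rfl fun j _ => ?_
    split_ifs with h₁ h₂ h₂
    · rw [show d + 2 - 2 * (j + 1) = d - 2 * j by omega]
      push_cast
      linear_combination 2 * succ_mul_heatMonomial_succ_fst (s := s) (w := w) j (d - 2 * j)
    · omega
    · omega
    · simp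
  rw [hsplit, hw, hs]

theorem eq_zero_of_heatPoly_eq_zero {d : ℕ} (h₁ : heatPoly (d + 1) s w = 0)
    (h₀ : heatPoly d s w = 0) : s = 0 ∧ w = 0 := by
  induction d with
  | zero => simp [heatPoly_zero] at h₀
  | succ d ih =>
    have h : 2 * s * heatPoly d s w = 0 := by
      simpa [h₁, h₀] using (heatPoly_recurrence (s := s) (w := w) d).symm
    rcases mul_eq_zero.mp h with hs | hd
    · have hs : s = 0 := by simpa using hs
      subst hs
      simpa [heatPoly_zero_left, Nat.factorial_ne_zero] using h₀
    · exact ih h₀ hd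

theorem continuous_heatPoly (d : ℕ) : Continuous fun p : ℂ × ℂ => heatPoly d p.1 p.2 := by
  refine continuous_finsetSum _ fun j _ => ?_
  split_ifs
  · unfold heatMonomial; fun_prop
  · exact continuous_const

theorem hasSum_heatPoly (d : ℕ) (s w : ℂ) :
    HasSum (fun p : ℕ × ℕ => if 2 * p.1 + p.2 = d then heatMonomial s w p else 0)
      (heatPoly d s w) := by
  have hsupp : ∀ p ∉ (Finset.range (d + 1)).image (fun j => (j, d - 2 * j)),
      (if 2 * p.1 + p.2 = d then heatMonomial s w p else 0) = 0 := by
    rintro ⟨j, k⟩ hp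
    refine if_neg fun (h : 2 * j + k = d) =>
      hp (Finset.mem_image.mpr ⟨j, Finset.mem_range.mpr (by omega), ?_⟩)
    simp only [Prod.mk.injEq, true_and]
    omega
  convert hasSum_sum_of_ne_finset_zero (L := SummationFilter.unconditional _) hsupp using 1
  rw [Finset.sum_image fun a _ b _ h => (Prod.mk.inj h).1, heatPoly]
  exact Finset.sum_congr rfl fun j _ =>
    if_congr (show 2 * j ≤ d ↔ 2 * j + (d - 2 * j) = d by omega) rfl rfl

end HeatPolynomials

def parabolicNorm (s w : ℂ) : ℝ := max √‖s‖ ‖w‖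

section ParabolicNorm

variable {s w : ℂ}

theorem parabolicNorm_nonneg : 0 ≤ parabolicNorm s w :=
  (Real.sqrt_nonneg _).trans (le_max_left _ _)

theorem norm_le_parabolicNorm_sq : ‖s‖ ≤ parabolicNorm s w ^ 2 := by
  rw [← Real.sq_sqrt (norm_nonneg s)]
  exact pow_le_pow_left₀ (Real.sqrt_nonneg _) (le_max_left _ _) 2

theorem norm_le_parabolicNorm : ‖w‖ ≤ parabolicNorm s w := le_max_right _ _

theorem parabolicNorm_eq_zero : parabolicNorm s w = 0 ↔ s = 0 ∧ w = 0 := by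
  refine ⟨fun h => ⟨?_, ?_⟩, fun ⟨hs, hw⟩ => by simp [parabolicNorm, hs, hw]⟩
  · simpa [h] using (norm_le_parabolicNorm_sq (s := s) (w := w))
  · simpa [h] using (norm_le_parabolicNorm (s := s) (w := w))

theorem parabolicNorm_scale {c : ℝ} (hc : 0 ≤ c) :
    parabolicNorm ((c : ℂ) ^ 2 * s) (c * w) = c * parabolicNorm s w := by
  simp only [parabolicNorm, norm_mul, norm_pow, Complex.norm_real, Real.norm_of_nonneg hc,
    Real.sqrt_mul (sq_nonneg c), Real.sqrt_sq hc, mul_max_of_nonneg _ _ hc]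

theorem continuous_parabolicNorm : Continuous fun p : ℂ × ℂ => parabolicNorm p.1 p.2 := by
  unfold parabolicNorm
  fun_prop

theorem isCompact_parabolicNorm_eq_one : IsCompact {p : ℂ × ℂ | parabolicNorm p.1 p.2 = 1} := by
  refine Metric.isCompact_of_isClosed_isBounded
    (isClosed_eq continuous_parabolicNorm continuous_const) ?_
  refine (Metric.isBounded_closedBall (x := 0) (r := 1)).subset fun p hp => ?_
  have hp : parabolicNorm p.1 p.2 = 1 := hp
  simp only [mem_closedBall_zero_iff, Prod.norm_def, max_le_iff]
  exact ⟨by simpa [hp] using (norm_le_parabolicNorm_sq (s := p.1) (w := p.2)),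
    hp ▸ norm_le_parabolicNorm⟩

end ParabolicNorm

theorem exists_pos_mul_parabolicNorm_pow_le (d : ℕ) : ∃ δ > 0, ∀ s w : ℂ,
    δ * parabolicNorm s w ^ (d + 1) ≤
      ‖heatPoly (d + 1) s w‖ + parabolicNorm s w * ‖heatPoly d s w‖ := by
  set g : ℂ × ℂ → ℝ := fun p => ‖heatPoly (d + 1) p.1 p.2‖ + ‖heatPoly d p.1 p.2‖
  have hgc : Continuous g := (continuous_heatPoly _).norm.add (continuous_heatPoly _).norm
  obtain ⟨p₀, hp₀, hmin⟩ := isCompact_parabolicNorm_eq_one.exists_isMinOn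
    ⟨(1, 0), by simp [parabolicNorm]⟩ hgc.continuousOn
  have hp₀ : parabolicNorm p₀.1 p₀.2 = 1 := hp₀
  have hδ : 0 < g p₀ := by
    refine (add_nonneg (norm_nonneg _) (norm_nonneg _)).lt_of_ne fun h => ?_
    obtain ⟨h₁, h₀⟩ := (add_eq_zero_iff_of_nonneg (norm_nonneg _) (norm_nonneg _)).mp h.symm
    have hzero := eq_zero_of_heatPoly_eq_zero (norm_eq_zero.mp h₁) (norm_eq_zero.mp h₀)
    simp [parabolicNorm_eq_zero.mpr hzero] at hp₀
  refine ⟨g p₀, hδ, fun s w => ?_⟩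
  set ρ := parabolicNorm s w
  have hρ₀ : 0 ≤ ρ := parabolicNorm_nonneg
  rcases hρ₀.eq_or_lt with hρ | hρ
  · rw [← hρ, zero_pow d.succ_ne_zero, mul_zero, zero_mul, add_zero]
    positivity
  have hunit : parabolicNorm (((ρ⁻¹ : ℝ) : ℂ) ^ 2 * s) ((ρ⁻¹ : ℝ) * w) = 1 := by
    rw [parabolicNorm_scale (inv_nonneg.2 hρ₀), inv_mul_cancel₀ hρ.ne']
  have hnorm (n : ℕ) : ‖heatPoly n (((ρ⁻¹ : ℝ) : ℂ) ^ 2 * s) ((ρ⁻¹ : ℝ) * w)‖ =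
      (ρ ^ n)⁻¹ * ‖heatPoly n s w‖ := by
    rw [heatPoly_scale, norm_mul, norm_pow, Complex.norm_real,
      Real.norm_of_nonneg (inv_nonneg.2 hρ₀), inv_pow]
  have hle := isMinOn_iff.mp hmin (_, _) hunit
  simp only [g, hnorm] at hle
  calc g p₀ * ρ ^ (d + 1)
      ≤ ((ρ ^ (d + 1))⁻¹ * ‖heatPoly (d + 1) s w‖ + (ρ ^ d)⁻¹ * ‖heatPoly d s w‖) *
          ρ ^ (d + 1) := by
        gcongr
    _ = ‖heatPoly (d + 1) s w‖ + ρ * ‖heatPoly d s w‖ := by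
        field_simp
        ring

theorem factorial_add_le (i j : ℕ) : (i + j)! ≤ 2 ^ (i + j) * i ! * j ! := by
  rw [← Nat.add_choose_mul_factorial_mul_factorial]
  gcongr
  exact Nat.choose_le_two_pow _ _

theorem norm_heatMonomial_mul_le {A : ℝ} {c : ℕ → ℂ} (hc : ∀ n, ‖c n‖ ≤ (n / 2)! * A)
    (s w : ℂ) (p : ℕ × ℕ) :
    ‖heatMonomial s w p * c (2 * p.1 + p.2)‖ ≤ A * (2 * parabolicNorm s w) ^ (2 * p.1 + p.2) := by
  obtain ⟨j, k⟩ := p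
  have hA : 0 ≤ A := (norm_nonneg _).trans (by simpa using hc 0)
  have hfact : (((2 * j + k) / 2)! : ℝ) ≤ 2 ^ (2 * j + k) * j ! * k ! := by
    calc (((2 * j + k) / 2)! : ℝ) ≤ (j + k)! := by
          exact_mod_cast Nat.factorial_le (by omega)
      _ ≤ 2 ^ (j + k) * j ! * k ! := by exact_mod_cast factorial_add_le j k
      _ ≤ 2 ^ (2 * j + k) * j ! * k ! := by gcongr <;> [norm_num; omega]
  have hmono : ‖s‖ ^ j * ‖w‖ ^ k ≤ parabolicNorm s w ^ (2 * j + k) := by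
    rw [pow_add, pow_mul]
    gcongr
    exacts [norm_le_parabolicNorm_sq, norm_le_parabolicNorm]
  calc ‖heatMonomial s w (j, k) * c (2 * j + k)‖
      = ‖s‖ ^ j * ‖w‖ ^ k / (j ! * k !) * ‖c (2 * j + k)‖ := by
        simp [heatMonomial]
    _ ≤ parabolicNorm s w ^ (2 * j + k) / (j ! * k !) * (2 ^ (2 * j + k) * j ! * k ! * A) :=
        mul_le_mul (by gcongr) ((hc _).trans (mul_le_mul_of_nonneg_right hfact hA))
          (norm_nonneg _) (div_nonneg (pow_nonneg parabolicNorm_nonneg _) (by positivity))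
    _ = A * (2 * parabolicNorm s w) ^ (2 * j + k) := by
        field_simp
        ring

theorem hasSum_half_pow_mul_half_pow :
    HasSum (fun p : ℕ × ℕ => (1 / 2 : ℝ) ^ p.1 * (1 / 2) ^ p.2) 4 := by
  have h := hasSum_geometric_two.mul hasSum_geometric_two
    (summable_mul_of_summable_norm (by simpa using summable_geometric_two)
      (by simpa using summable_geometric_two))
  norm_num at h
  exact h


theorem pow_le_two_mul_pow_mul_half_pow {y : ℝ} (hy₀ : 0 ≤ y) (hy : y ≤ 1 / 2) {m n : ℕ}
    (hmn : m ≤ n) : y ^ n ≤ (2 * y) ^ m * (1 / 2) ^ n := by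
  obtain ⟨k, rfl⟩ := Nat.exists_eq_add_of_le hmn
  calc y ^ (m + k) = y ^ m * y ^ k := pow_add _ _ _
    _ ≤ y ^ m * (1 / 2) ^ k := by gcongr
    _ = (2 * y) ^ m * (1 / 2) ^ (m + k) := by
        rw [mul_pow, pow_add, mul_mul_mul_comm, ← mul_pow]
        norm_num

theorem half_pow_le_half_pow_mul_half_pow (j k : ℕ) :
    (1 / 2 : ℝ) ^ (2 * j + k) ≤ (1 / 2) ^ j * (1 / 2) ^ k := by
  rw [← pow_add]
  exact pow_le_pow_of_le_one (by norm_num) (by norm_num) (by omega)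

theorem norm_add_norm_pos_of_approx {a b c h₁ h₀ : ℂ} {ρ r δ K : ℝ} (hρ : 0 ≤ ρ) (hρ₁ : ρ ≤ 1)
    (hr : 0 < r) (hK : 2 * K * ρ < ‖c‖ * δ) (hlow : δ * r ≤ ‖h₁‖ + ρ * ‖h₀‖)
    (ha : ‖a - c * h₁‖ ≤ K * ρ * r) (hb : ‖b - c * h₀‖ ≤ K * r) : 0 < ‖a‖ + ‖b‖ := by
  have ha' := norm_le_norm_add_norm_sub a (c * h₁)
  have hb' := norm_le_norm_add_norm_sub b (c * h₀)
  rw [norm_mul] at ha' hb'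
  have hb'' : ρ * (‖c‖ * ‖h₀‖) ≤ ρ * (‖b‖ + K * r) := by gcongr; linarith
  have hρb : ρ * ‖b‖ ≤ ‖b‖ := mul_le_of_le_one_left (norm_nonneg b) hρ₁
  have hlow' := mul_le_mul_of_nonneg_left hlow (norm_nonneg c)
  have hgap := mul_lt_mul_of_pos_right hK hr
  linarith

namespace IsEntireCaloric

variable {F : ℂ × ℂ → ℂ}

theorem hasSum_heatMonomial_mul (hF : IsEntireCaloric F) (x : ℂ × ℂ) (s w : ℂ)
    (hsum : Summable fun p : ℕ × ℕ => heatMonomial s w p * partialZ^[2 * p.1 + p.2] F x) :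
    HasSum (fun p : ℕ × ℕ => heatMonomial s w p * partialZ^[2 * p.1 + p.2] F x)
      (F (x + (s, w))) := by
  have htime : HasSum (fun j : ℕ => s ^ j / j ! * partialZ^[2 * j] F (x.1, x.2 + w))
      (F (x.1 + s, x.2 + w)) := by
    have := Complex.hasSum_taylorSeries_of_entire (differentiable_sliceT hF.1 (x.2 + w)) x.1
      (x.1 + s)
    simp only [add_sub_cancel_left, smul_eq_mul,
      hF.iteratedDeriv_sliceT_eq_partialZ_iterate] at this
    exact this.congr_fun fun j => by ring
  have hspace (j : ℕ) : HasSum (fun k : ℕ => heatMonomial s w (j, k) * partialZ^[2 * j + k] F x)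
      (s ^ j / j ! * partialZ^[2 * j] F (x.1, x.2 + w)) := by
    have := (Complex.hasSum_taylorSeries_of_entire
      (differentiable_sliceZ (analyticOnNhd_partialZ_iterate hF.1 (2 * j)) x.1) x.2
      (x.2 + w)).mul_left (s ^ j / j !)
    simp only [add_sub_cancel_left, smul_eq_mul,
      iteratedDeriv_sliceZ_eq_partialZ_iterate (analyticOnNhd_partialZ_iterate hF.1 _),
      ← Function.iterate_add_apply] at this
    refine this.congr_fun fun k => ?_
    rw [heatMonomial, add_comm (2 * j)]
    ring
  obtain ⟨a, ha⟩ := hsum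
  rwa [(ha.prod_fiberwise hspace).unique htime] at ha

theorem exists_norm_sub_heatPoly_le (hF : IsEntireCaloric F) (x : ℂ × ℂ) {d : ℕ}
    (hvan : ∀ n < d, partialZ^[n] F x = 0) :
    ∃ C ≥ 0, ∀ s w : ℂ, parabolicNorm s w ≤ 1 / 4 →
      ‖F (x + (s, w)) - partialZ^[d] F x * heatPoly d s w‖ ≤ C * parabolicNorm s w ^ (d + 1) := by
  obtain ⟨A, hA⟩ := hF.exists_norm_partialZ_iterate_le x
  have hA₀ : 0 ≤ A := (norm_nonneg _).trans (by simpa using hA 0)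
  refine ⟨4 * A * 4 ^ (d + 1), by positivity, fun s w hρ => ?_⟩
  set y := 2 * parabolicNorm s w with hy_def
  have hy₀ : 0 ≤ y := mul_nonneg zero_le_two parabolicNorm_nonneg
  have hy : y ≤ 1 / 2 := by linarith
  have hterm (p : ℕ × ℕ) := norm_heatMonomial_mul_le hA s w p
  have hsum : Summable fun p : ℕ × ℕ => heatMonomial s w p * partialZ^[2 * p.1 + p.2] F x := by
    refine Summable.of_norm_bounded (hasSum_half_pow_mul_half_pow.summable.mul_left A) fun p => ?_
    refine (hterm p).trans (mul_le_mul_of_nonneg_left ?_ hA₀)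
    exact (pow_le_pow_left₀ hy₀ hy _).trans (half_pow_le_half_pow_mul_half_pow _ _)
  have hdiff := (hF.hasSum_heatMonomial_mul x s w hsum).sub
    ((hasSum_heatPoly d s w).mul_right (partialZ^[d] F x))
  rw [mul_comm (heatPoly d s w)] at hdiff
  refine (hdiff.norm_le_of_bounded (hasSum_half_pow_mul_half_pow.mul_left (A * (2 * y) ^ (d + 1)))
    fun ⟨j, k⟩ => ?_).trans_eq (by rw [hy_def]; ring)
  have hmaj₀ : 0 ≤ A * (2 * y) ^ (d + 1) * ((1 / 2 : ℝ) ^ j * (1 / 2) ^ k) :=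
    mul_nonneg (mul_nonneg hA₀ (pow_nonneg (mul_nonneg zero_le_two hy₀) _)) (by positivity)
  dsimp only
  rcases lt_trichotomy (2 * j + k) d with h | h | h
  · rw [hvan _ h, if_neg h.ne]
    simpa using hmaj₀
  · rw [if_pos h, h]
    simpa using hmaj₀
  · rw [if_neg h.ne', zero_mul, sub_zero]
    calc ‖heatMonomial s w (j, k) * partialZ^[2 * j + k] F x‖ ≤ A * y ^ (2 * j + k) := hterm _
      _ ≤ A * ((2 * y) ^ (d + 1) * ((1 / 2) ^ j * (1 / 2) ^ k)) := by
        gcongr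
        exact (pow_le_two_mul_pow_mul_half_pow hy₀ hy h).trans
          (by gcongr; exact half_pow_le_half_pow_mul_half_pow _ _)
      _ = A * (2 * y) ^ (d + 1) * ((1 / 2) ^ j * (1 / 2) ^ k) := by ring

theorem exists_first_partialZ_iterate_ne_zero (hF : IsEntireCaloric F) (hne : ∃ p, F p ≠ 0)
    {x : ℂ × ℂ} (hx : F x = 0) :
    ∃ d, partialZ^[d + 1] F x ≠ 0 ∧ ∀ n < d + 1, partialZ^[n] F x = 0 := by
  classical
  have hex : ∃ n, partialZ^[n] F x ≠ 0 := by
    by_contra! h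
    obtain ⟨p, hp⟩ := hne
    exact hp (congrFun (hF.eq_zero_of_partialZ_iterate_eq_zero h) p)
  obtain ⟨d, hd⟩ := Nat.exists_eq_add_one_of_ne_zero fun h0 : Nat.find hex = 0 =>
    Nat.find_spec hex (by rw [h0]; exact hx)
  refine ⟨d, hd ▸ Nat.find_spec hex, fun n hn => not_not.mp (Nat.find_min hex ?_)⟩
  rwa [hd]

theorem exists_pos_norm_add_norm_partialZ (hF : IsEntireCaloric F) (hne : ∃ p, F p ≠ 0)
    {x : ℂ × ℂ} (hx : F x = 0) :
    ∃ ε > 0, ∀ s w : ℂ, 0 < parabolicNorm s w → parabolicNorm s w < ε →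
      0 < ‖F (x + (s, w))‖ + ‖partialZ F (x + (s, w))‖ := by
  obtain ⟨d, hc, hvan⟩ := hF.exists_first_partialZ_iterate_ne_zero hne hx
  obtain ⟨C₁, hC₁₀, hC₁⟩ := hF.exists_norm_sub_heatPoly_le x hvan
  obtain ⟨C₂, hC₂₀, hC₂⟩ := (hF.partialZ_iterate 1).exists_norm_sub_heatPoly_le x (d := d)
    fun n hn => by rw [← Function.iterate_add_apply]; exact hvan _ (by omega)
  rw [← Function.iterate_add_apply] at hC₂
  obtain ⟨δ, hδ, hlow⟩ := exists_pos_mul_parabolicNorm_pow_le d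
  set c := partialZ^[d + 1] F x
  set K := max C₁ C₂
  have hK : 0 ≤ K := le_max_of_le_left hC₁₀
  have hcδ : 0 < ‖c‖ * δ := mul_pos (norm_pos_iff.mpr hc) hδ
  refine ⟨min (1 / 4) (‖c‖ * δ / (2 * K + 1)), by positivity, fun s w hρ hρε => ?_⟩
  set ρ := parabolicNorm s w
  have hρ₄ : ρ ≤ 1 / 4 := (hρε.trans_le (min_le_left _ _)).le
  refine norm_add_norm_pos_of_approx (K := K) hρ.le (by linarith) (pow_pos hρ (d + 1)) ?_ (hlow s w)
    ((hC₁ s w hρ₄).trans ?_) ((hC₂ s w hρ₄).trans ?_)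
  · have := (lt_div_iff₀ (by positivity)).mp (hρε.trans_le (min_le_right _ _))
    linarith
  · calc C₁ * ρ ^ (d + 1 + 1) ≤ K * ρ ^ (d + 1 + 1) := by gcongr; exact le_max_left _ _
      _ = K * ρ * ρ ^ (d + 1) := by ring
  · gcongr
    exact le_max_right _ _

theorem eventually_pos_norm_add_norm_partialZ (hF : IsEntireCaloric F) (hne : ∃ p, F p ≠ 0)
    {x : ℂ × ℂ} (hx : F x = 0) : ∀ᶠ p in 𝓝[≠] x, 0 < ‖F p‖ + ‖partialZ F p‖ := by
  obtain ⟨ε, hε, hpos⟩ := hF.exists_pos_norm_add_norm_partialZ hne hx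
  have hnear : Tendsto (fun p : ℂ × ℂ => parabolicNorm (p - x).1 (p - x).2) (𝓝 x) (𝓝 0) := by
    have h := (continuous_parabolicNorm.comp (continuous_sub_right x)).tendsto x
    simp only [Function.comp_def, sub_self, Prod.fst_zero, Prod.snd_zero] at h
    rwa [parabolicNorm_eq_zero.mpr ⟨rfl, rfl⟩] at h
  filter_upwards [nhdsWithin_le_nhds (hnear.eventually (gt_mem_nhds hε)), self_mem_nhdsWithin]
    with p hpε hpx
  have hρ : 0 < parabolicNorm (p - x).1 (p - x).2 := by
    refine parabolicNorm_nonneg.lt_of_ne fun h => hpx ?_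
    obtain ⟨h₁, h₂⟩ := parabolicNorm_eq_zero.mp h.symm
    exact sub_eq_zero.mp (Prod.ext h₁ h₂)
  have h := hpos _ _ hρ hpε
  rwa [Prod.mk.eta, add_sub_cancel] at h

end IsEntireCaloric

end

theorem multiple_zeros_isolated_general
    (F : ℂ × ℂ → ℂ) (hF : IsEntireCaloric F) (hne : ∃ p : ℂ × ℂ, F p ≠ 0)
    (tast zast : ℂ)
    (h0 : F (tast, zast) = 0) :
    (∃ U : Set (ℂ × ℂ), IsOpen U ∧ (tast, zast) ∈ U ∧
      ∀ p ∈ U \ {(tast, zast)},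
        0 < ‖F p‖ + ‖deriv (fun w => F (p.1, w)) p.2‖) ∧
    DiscreteTopology
      ({p : ℂ × ℂ | F p = 0 ∧ deriv (fun w => F (p.1, w)) p.2 = 0} : Set (ℂ × ℂ)) := by
  have hiso {x : ℂ × ℂ} (hx : F x = 0) :
      ∀ᶠ p in 𝓝[≠] x, 0 < ‖F p‖ + ‖deriv (fun w => F (p.1, w)) p.2‖ := by
    filter_upwards [hF.eventually_pos_norm_add_norm_partialZ hne hx] with p hp
    rwa [deriv_sliceZ_eq_partialZ (hF.1 p trivial).differentiableAt]
  refine ⟨?_, discreteTopology_subtype_iff.mpr fun x hx => ?_⟩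
  · obtain ⟨U, hU, hUopen, hmem⟩ := eventually_nhds_iff.mp (eventually_nhdsWithin_iff.mp (hiso h0))
    exact ⟨U, hUopen, hmem, fun p hp => hU p hp.1 hp.2⟩
  · refine inf_principal_eq_bot.mpr ?_
    filter_upwards [hiso hx.1] with p hp hpM
    simp [hpM.1, hpM.2] at hp

/-- If `F ≢ 0` is an entire caloric function and
`F(t*,z*) = ∂_z F(t*,z*) = 0`, then on some punctured neighborhood of `(t*,z*)` one has
`|F| + |∂_z F| > 0`; consequently the set `M_F` of multiple zeros of `F(t,·)` is a
discrete subset of `ℂ²`. -/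
theorem multiple_zeros_isolated
    (F : ℂ × ℂ → ℂ) (hF : IsEntireCaloric F) (hne : ∃ p : ℂ × ℂ, F p ≠ 0)
    (tast zast : ℂ)
    (h0 : F (tast, zast) = 0)
    (h1 : deriv (fun w => F (tast, w)) zast = 0) :
    (∃ U : Set (ℂ × ℂ), IsOpen U ∧ (tast, zast) ∈ U ∧
      ∀ p ∈ U \ {(tast, zast)},
        0 < ‖F p‖ + ‖deriv (fun w => F (p.1, w)) p.2‖) ∧
    DiscreteTopology
      ({p : ℂ × ℂ | F p = 0 ∧ deriv (fun w => F (p.1, w)) p.2 = 0} : Set (ℂ × ℂ)) :=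
  multiple_zeros_isolated_general F hF hne tast zast h0
end

section
/- Let (z_k)_{k≥0} be a sequence of nonzero complex numbers with z₀ ≠ z_k for all k ≥ 1 and Σ_{k≥0} 1/|z_k| < ∞, let A ∈ ℂ and C ∈ ℂ with C ≠ 0, and define the entire function G(z) := C·e^{Az}·∏_{k≥0}(1 − z/z_k) (the infinite product converges locally uniformly by the summability hypothesis, and z₀ is a simple zero of G). Then G'(z₀) ≠ 0 and G''(z₀)/G'(z₀) = 2A + 2·Σ_{k≥1} 1/(z₀ − z_k), where the series on the right converges. -/
/-!
Write `G(w) = (w - z₀) H(w)` with `H(w) = -z₀⁻¹ C e^{Aw} ∏_{k ≥ 1} (1 - w/z_k)`, an entire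
function with `H(z₀) ≠ 0`. Then `G'(z₀) = H(z₀)` and `G''(z₀) = 2 H'(z₀)`, so
`G''(z₀)/G'(z₀) = 2 H'(z₀)/H(z₀)`. Since the product converges locally uniformly, its
logarithmic derivative is the sum of those of its factors, and `1 - w/z_k` contributes
`1/(w - z_k)`.
-/

open Filter

section GenusZeroProduct

variable {a : ℕ → ℂ}

theorem hasProdLocallyUniformlyOn_one_sub_div (ha : Summable fun k ↦ ‖a k‖⁻¹) :
    HasProdLocallyUniformlyOn (fun k w ↦ 1 - w / a k) (fun w ↦ ∏' k, (1 - w / a k)) Set.univ := by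
  refine hasProdLocallyUniformlyOn_of_forall_compact isOpen_univ fun K _ hK ↦ ?_
  obtain ⟨r, hr⟩ := hK.isBounded.subset_closedBall 0
  simp_rw [sub_eq_add_neg]
  refine (ha.mul_left r).hasProdUniformlyOn_nat_one_add hK (.of_forall fun k w hw ↦ ?_)
    fun _ ↦ by fun_prop
  rw [norm_neg, norm_div, div_eq_mul_inv]
  have hwr : ‖w‖ ≤ r := mem_closedBall_zero_iff.mp (hr hw)
  gcongr

theorem differentiable_tprod_one_sub_div (ha : Summable fun k ↦ ‖a k‖⁻¹) :
    Differentiable ℂ fun w ↦ ∏' k, (1 - w / a k) := by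
  rw [← differentiableOn_univ]
  exact (hasProdLocallyUniformlyOn_one_sub_div ha).differentiableOn
    (.of_forall fun s ↦ by fun_prop) isOpen_univ

theorem summable_norm_div_of_summable_norm_inv (ha : Summable fun k ↦ ‖a k‖⁻¹) (w : ℂ) :
    Summable fun k ↦ ‖w / a k‖ :=
  (ha.mul_left ‖w‖).congr fun k ↦ by rw [norm_div, div_eq_mul_inv]

theorem multipliable_one_sub_div (ha : Summable fun k ↦ ‖a k‖⁻¹) (w : ℂ) :
    Multipliable fun k ↦ 1 - w / a k := by
  simpa only [sub_eq_add_neg] using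
    multipliable_one_add_of_summable (by simpa using summable_norm_div_of_summable_norm_inv ha w)

theorem one_sub_div_ne_zero {K : Type*} [DivisionRing K] {c w : K} (hw : c ≠ w) :
    1 - w / c ≠ 0 := by
  rw [sub_ne_zero, ne_comm]
  rcases eq_or_ne c 0 with rfl | hc
  · simp
  · exact fun h ↦ hw ((div_eq_one_iff_eq hc).mp h).symm

theorem tprod_one_sub_div_ne_zero (ha : Summable fun k ↦ ‖a k‖⁻¹) {w : ℂ} (hw : ∀ k, a k ≠ w) :
    ∏' k, (1 - w / a k) ≠ 0 := by
  simp_rw [sub_eq_add_neg]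
  refine tprod_one_add_ne_zero_of_summable (fun k ↦ ?_)
    (by simpa using summable_norm_div_of_summable_norm_inv ha w)
  simpa only [← sub_eq_add_neg] using one_sub_div_ne_zero (hw k)

theorem summable_inv_sub_of_summable_norm_inv (ha0 : ∀ k, a k ≠ 0)
    (ha : Summable fun k ↦ ‖a k‖⁻¹) (x : ℂ) :
    Summable fun k ↦ (x - a k)⁻¹ := by
  refine (ha.mul_left 2).of_norm_bounded_eventually ?_
  have hsmall : ∀ᶠ k in cofinite, ‖x‖ * ‖a k‖⁻¹ ≤ 1 / 2 := by
    simpa using (ha.tendsto_cofinite_zero.const_mul ‖x‖).eventually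
      (ge_mem_nhds (by norm_num : (‖x‖ * 0 : ℝ) < 1 / 2))
  filter_upwards [hsmall] with k hk
  have hak : 0 < ‖a k‖ := norm_pos_iff.mpr (ha0 k)
  have hx : ‖x‖ ≤ ‖a k‖ / 2 := by
    linarith [(mul_inv_le_iff₀ hak).mp hk]
  have hdist : ‖a k‖ / 2 ≤ ‖x - a k‖ := by
    have := norm_sub_norm_le (a k) x
    rw [norm_sub_rev] at this
    linarith
  rw [norm_inv]
  calc ‖x - a k‖⁻¹ ≤ (‖a k‖ / 2)⁻¹ := inv_anti₀ (by positivity) hdist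
    _ = 2 * ‖a k‖⁻¹ := by rw [inv_div, div_eq_mul_inv]

theorem logDeriv_one_sub_div {c : ℂ} (hc : c ≠ 0) (x : ℂ) :
    logDeriv (fun w ↦ 1 - w / c) x = (x - c)⁻¹ := by
  have hd : HasDerivAt (fun w ↦ 1 - w / c) (-c⁻¹) x := by
    simpa [one_div] using ((hasDerivAt_id x).div_const c).const_sub 1
  rw [logDeriv_apply, hd.deriv]
  rcases eq_or_ne x c with rfl | hxc
  · simp [hc]
  · field_simp
    ring

theorem logDeriv_tprod_one_sub_div (ha0 : ∀ k, a k ≠ 0) (ha : Summable fun k ↦ ‖a k‖⁻¹)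
    {x : ℂ} (hx : ∀ k, a k ≠ x) :
    logDeriv (fun w ↦ ∏' k, (1 - w / a k)) x = ∑' k, (x - a k)⁻¹ := by
  have hterm : ∀ k, logDeriv (fun w ↦ 1 - w / a k) x = (x - a k)⁻¹ :=
    fun k ↦ logDeriv_one_sub_div (ha0 k) x
  rw [logDeriv_tprod_eq_tsum isOpen_univ (Set.mem_univ x) ?_ (fun k ↦ by fun_prop)
    (by simpa only [hterm] using summable_inv_sub_of_summable_norm_inv ha0 ha x)
    (hasProdLocallyUniformlyOn_one_sub_div ha).multipliableLocallyUniformlyOn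
    (tprod_one_sub_div_ne_zero ha hx)]
  · exact tsum_congr hterm
  · exact fun k ↦ one_sub_div_ne_zero (hx k)

end GenusZeroProduct

section SimpleZero

variable {𝕜 : Type*} [NontriviallyNormedField 𝕜] {h : 𝕜 → 𝕜} {c : 𝕜}

theorem hasDerivAt_sub_mul {x : 𝕜} (hh : DifferentiableAt 𝕜 h x) :
    HasDerivAt (fun w ↦ (w - c) * h w) (h x + (x - c) * deriv h x) x := by
  simpa using ((hasDerivAt_id' x).sub_const c).fun_mul hh.hasDerivAt

theorem deriv_sub_mul_self (hh : DifferentiableAt 𝕜 h c) :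
    deriv (fun w ↦ (w - c) * h w) c = h c := by
  simp [(hasDerivAt_sub_mul hh).deriv]

theorem iteratedDeriv_two_sub_mul_self (hh : Differentiable 𝕜 h)
    (hh' : DifferentiableAt 𝕜 (deriv h) c) :
    iteratedDeriv 2 (fun w ↦ (w - c) * h w) c = 2 * deriv h c := by
  have hderiv : deriv (fun w ↦ (w - c) * h w) = fun x ↦ h x + (x - c) * deriv h x :=
    funext fun x ↦ (hasDerivAt_sub_mul (hh x)).deriv
  rw [iteratedDeriv_succ, iteratedDeriv_one, hderiv,
    ((hh c).hasDerivAt.fun_add (hasDerivAt_sub_mul hh')).deriv]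
  ring

end SimpleZero

theorem logDeriv_cexp_const_mul (A x : ℂ) : logDeriv (fun w ↦ Complex.exp (A * w)) x = A := by
  rw [logDeriv_apply, (((hasDerivAt_id' x).const_mul A).cexp).deriv]
  field_simp [Complex.exp_ne_zero]

/-- Let `(z_k)` be nonzero complex numbers with `z₀ ≠ z_k` for `k ≥ 1` and
`Σ 1/|z_k| < ∞`, and let `G(z) = C e^{Az} ∏_{k≥0} (1 − z/z_k)` (genus-zero product), so that
`z₀` is a simple zero of `G`. Then `G'(z₀) ≠ 0`, the series `Σ_{k≥1} 1/(z₀ − z_k)` converges,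
and `G''(z₀)/G'(z₀) = 2A + 2 Σ_{k≥1} 1/(z₀ − z_k)`. -/
theorem genus_zero_product_second_log_deriv
    (z : ℕ → ℂ) (hz : ∀ k, z k ≠ 0) (hsimple : ∀ k : ℕ, 1 ≤ k → z 0 ≠ z k)
    (hsum : Summable fun k : ℕ => ‖z k‖⁻¹)
    (A C : ℂ) (hC : C ≠ 0)
    (G : ℂ → ℂ)
    (hG : ∀ w : ℂ, G w = C * Complex.exp (A * w) * ∏' k : ℕ, (1 - w / z k)) :
    deriv G (z 0) ≠ 0 ∧
    (Summable fun k : ℕ => (z 0 - z (k + 1))⁻¹) ∧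
    iteratedDeriv 2 G (z 0) / deriv G (z 0) =
      2 * A + 2 * ∑' k : ℕ, (z 0 - z (k + 1))⁻¹ := by
  have hsum' : Summable fun k ↦ ‖z (k + 1)‖⁻¹ := (summable_nat_add_iff 1).mpr hsum
  have hdistinct : ∀ k, z (k + 1) ≠ z 0 := fun k ↦ (hsimple (k + 1) k.succ_pos).symm
  let F : ℂ → ℂ := fun w ↦ ∏' k, (1 - w / z (k + 1))
  let H : ℂ → ℂ := fun w ↦ -(z 0)⁻¹ * C * (Complex.exp (A * w) * F w)
  have hGH : G = fun w ↦ (w - z 0) * H w := funext fun w ↦ by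
    rw [hG, tprod_eq_zero_mul' (f := fun k ↦ 1 - w / z k) (multipliable_one_sub_div hsum' w)]
    simp only [H, F]
    field_simp [hz 0]
    ring
  have hF : Differentiable ℂ F := differentiable_tprod_one_sub_div hsum'
  have hF0 : F (z 0) ≠ 0 := tprod_one_sub_div_ne_zero hsum' hdistinct
  have hHd : Differentiable ℂ H := by fun_prop
  have hH0 : H (z 0) ≠ 0 := by simp [H, hz 0, hC, hF0, Complex.exp_ne_zero]
  have hlogH : logDeriv H (z 0) = A + ∑' k, (z 0 - z (k + 1))⁻¹ := by
    rw [logDeriv_const_mul _ _ (by simp [hz 0, hC]),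
      logDeriv_mul (f := fun w ↦ Complex.exp (A * w)) _ (Complex.exp_ne_zero _) hF0
        (by fun_prop) (hF _),
      logDeriv_cexp_const_mul, logDeriv_tprod_one_sub_div (fun k ↦ hz _) hsum' hdistinct]
  refine ⟨?_, summable_inv_sub_of_summable_norm_inv (fun k ↦ hz _) hsum' _, ?_⟩
  · rwa [hGH, deriv_sub_mul_self (hHd _)]
  · rw [hGH, deriv_sub_mul_self (hHd _), iteratedDeriv_two_sub_mul_self hHd (hHd.deriv _),
      mul_div_assoc, ← logDeriv_apply, hlogH, mul_add]
end

section
/- Let F, G : ℂ × ℂ → ℂ be entire caloric functions and suppose that for some fixed t₀ ∈ ℂ one has F(t₀, z) = G(t₀, z) for all z ∈ ℂ. Then F(t,z) = G(t,z) for all (t,z) ∈ ℂ². In particular, if F(t₀, z) = 0 for all z ∈ ℂ for some fixed t₀, then F is identically zero. -/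
/-!
The heat equation trades each `t`-derivative for two `z`-derivatives, and since partial
derivatives of an analytic function commute, `∂_z F` is again caloric. Inductively, the `n`-th
`t`-derivative of `F` at `(t₀, z)` is the `2n`-th derivative of the slice `F(t₀, ·)` at `z`. So the
slice at `t₀` determines the Taylor series at `t₀` of every entire function `s ↦ F(s, z)`, and
hence the function itself.
-/

open Filter

open Set
open scoped ContDiff

noncomputable def partialDeriv (𝕜 : Type*) {E F : Type*} [NontriviallyNormedField 𝕜]
    [NormedAddCommGroup E] [NormedSpace 𝕜 E] [NormedAddCommGroup F] [NormedSpace 𝕜 F]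
    (v : E) (f : E → F) : E → F :=
  fun p => fderiv 𝕜 f p v

section PartialDeriv

variable {𝕜 E F : Type*} [NontriviallyNormedField 𝕜] [NormedAddCommGroup E] [NormedSpace 𝕜 E]
  [NormedAddCommGroup F] [NormedSpace 𝕜 F]

theorem AnalyticOnNhd.partialDeriv [CompleteSpace F] {f : E → F} {s : Set E}
    (hf : AnalyticOnNhd 𝕜 f s) (v : E) : AnalyticOnNhd 𝕜 (partialDeriv 𝕜 v f) s :=
  fun p hp => ((ContinuousLinearMap.apply 𝕜 F v).analyticAt _).comp (hf.fderiv p hp)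

theorem AnalyticAt.partialDeriv_comm [CompleteSpace F] {f : E → F} {p : E}
    (hf : AnalyticAt 𝕜 f p) (u v : E) :
    partialDeriv 𝕜 u (partialDeriv 𝕜 v f) p = partialDeriv 𝕜 v (partialDeriv 𝕜 u f) p := by
  have hsecond : ∀ u v : E,
      partialDeriv 𝕜 u (partialDeriv 𝕜 v f) p = fderiv 𝕜 (fderiv 𝕜 f) p u v :=
    fun u v => DFunLike.congr_fun (((ContinuousLinearMap.apply 𝕜 F v).hasFDerivAt.comp p
      hf.fderiv.differentiableAt.hasFDerivAt).fderiv) u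
  rw [hsecond, hsecond, (hf.contDiffAt (n := ω)).isSymmSndFDerivAt_of_omega u v]

theorem DifferentiableAt.deriv_slice_fst {f : 𝕜 × E → F} {x : 𝕜} {y : E}
    (hf : DifferentiableAt 𝕜 f (x, y)) :
    deriv (fun s => f (s, y)) x = partialDeriv 𝕜 (1, 0) f (x, y) := by
  have := hf.hasFDerivAt.comp_hasDerivAt x ((hasDerivAt_id x).prodMk (hasDerivAt_const x y))
  simpa [partialDeriv, Function.comp_def] using this.deriv

theorem DifferentiableAt.deriv_slice_snd {f : E × 𝕜 → F} {x : E} {y : 𝕜}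
    (hf : DifferentiableAt 𝕜 f (x, y)) :
    deriv (fun w => f (x, w)) y = partialDeriv 𝕜 (0, 1) f (x, y) := by
  have := hf.hasFDerivAt.comp_hasDerivAt y ((hasDerivAt_const y x).prodMk (hasDerivAt_id y))
  simpa [partialDeriv, Function.comp_def] using this.deriv

theorem iteratedDeriv_slice_snd [CompleteSpace F] {f : E × 𝕜 → F}
    (hf : AnalyticOnNhd 𝕜 f univ) (n : ℕ) (x : E) (y : 𝕜) :
    iteratedDeriv n (fun w => f (x, w)) y = (partialDeriv 𝕜 (0, 1))^[n] f (x, y) := by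
  induction n generalizing f with
  | zero => rfl
  | succ n ih =>
    have hderiv : deriv (fun w => f (x, w)) = fun w => partialDeriv 𝕜 (0, 1) f (x, w) :=
      funext fun w => (hf (x, w) trivial).differentiableAt.deriv_slice_snd
    rw [iteratedDeriv_succ', hderiv, ih (hf.partialDeriv _), Function.iterate_succ_apply]

end PartialDeriv

theorem Complex.eq_of_iteratedDeriv_eq {E : Type*} [NormedAddCommGroup E] [NormedSpace ℂ E]
    [CompleteSpace E] {f g : ℂ → E} (hf : Differentiable ℂ f) (hg : Differentiable ℂ g) (c : ℂ)
    (h : ∀ n, iteratedDeriv n f c = iteratedDeriv n g c) : f = g :=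
  funext fun z => (hasSum_taylorSeries_of_entire hf c z).unique <| by
    simpa only [h] using hasSum_taylorSeries_of_entire hg c z

local notation "∂ₜ" => partialDeriv ℂ ((1, 0) : ℂ × ℂ)
local notation "∂z" => partialDeriv ℂ ((0, 1) : ℂ × ℂ)

section Caloric

variable {K : ℂ × ℂ → ℂ}

theorem isEntireCaloric_iff :
    IsEntireCaloric K ↔ AnalyticOnNhd ℂ K univ ∧ ∂ₜ K = ∂z (∂z K) := by
  refine and_congr_right fun hK => ?_
  have htime : ∀ t z, deriv (fun s => K (s, z)) t = ∂ₜ K (t, z) :=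
    fun t z => (hK (t, z) trivial).differentiableAt.deriv_slice_fst
  have hspace : ∀ t z, iteratedDeriv 2 (fun w => K (t, w)) z = ∂z (∂z K) (t, z) :=
    fun t z => iteratedDeriv_slice_snd hK 2 t z
  simp only [htime, hspace, funext_iff, Prod.forall]

theorem IsEntireCaloric.partialDeriv_snd (hK : IsEntireCaloric K) : IsEntireCaloric (∂z K) := by
  obtain ⟨hA, hheat⟩ := isEntireCaloric_iff.mp hK
  refine isEntireCaloric_iff.mpr ⟨hA.partialDeriv _, funext fun p => ?_⟩
  rw [(hA p trivial).partialDeriv_comm, hheat]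

theorem IsEntireCaloric.iteratedDeriv_slice_fst (hK : IsEntireCaloric K) (n : ℕ) (t z : ℂ) :
    iteratedDeriv n (fun s => K (s, z)) t = iteratedDeriv (2 * n) (fun w => K (t, w)) z := by
  rw [iteratedDeriv_slice_snd hK.1]
  induction n generalizing K with
  | zero => rfl
  | succ n ih =>
    have hderiv : deriv (fun s => K (s, z)) = fun s => ∂z (∂z K) (s, z) := by
      funext s
      rw [(hK.1 (s, z) trivial).differentiableAt.deriv_slice_fst, (isEntireCaloric_iff.mp hK).2]
    rw [iteratedDeriv_succ', hderiv, ih hK.partialDeriv_snd.partialDeriv_snd, Nat.mul_succ,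
      Function.iterate_add_apply]
    rfl

theorem IsEntireCaloric.differentiable_slice_fst (hK : IsEntireCaloric K) (z : ℂ) :
    Differentiable ℂ fun s => K (s, z) :=
  (differentiableOn_univ.mp hK.1.differentiableOn).comp
    (differentiable_id.prodMk (differentiable_const z))

end Caloric

/-- Two entire caloric functions agreeing at some fixed time `t₀` (for all
`z`) agree everywhere. -/
theorem caloric_unique_from_time_slice
    (F G : ℂ × ℂ → ℂ) (hF : IsEntireCaloric F) (hG : IsEntireCaloric G)
    (t₀ : ℂ) (h : ∀ z : ℂ, F (t₀, z) = G (t₀, z)) :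
    ∀ t z : ℂ, F (t, z) = G (t, z) := by
  intro t z
  have htaylor : ∀ n, iteratedDeriv n (fun s => F (s, z)) t₀ =
      iteratedDeriv n (fun s => G (s, z)) t₀ := fun n => by
    rw [hF.iteratedDeriv_slice_fst, hG.iteratedDeriv_slice_fst, funext h]
  exact congrFun (Complex.eq_of_iteratedDeriv_eq (hF.differentiable_slice_fst z)
    (hG.differentiable_slice_fst z) t₀ htaylor) t
end
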